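/- arXiv:2310.20551 — 9 statements merged into one kernel-verified Lean document; each statement's English description precedes it below -/
import Mathlib

section
/- Let σ be a preradical on R-Mod. The following are equivalent: (1) σ is cohereditary; (2) σ(M) = σ(R)M for every R-module M; (3) σ is a radical and its torsion-free class F_σ is closed under quotients, i.e. every quotient module of a module in F_σ lies in F_σ. -/
/-! Basic framework: bundled left `R`-modules (in the same universe as `R`),
preradicals on `R`-Mod, and the notions from the paper
"On σ-classes of modules with applications". -/

universe u

/-- A bundled left `R`-module whose underlying type lives in the same universe as `R`. -/
structure RMod (R : Type u) [Ring R] : Type (u + 1) where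
  carrier : Type u
  [isAddCommGroup : AddCommGroup carrier]
  [isModule : Module R carrier]

attribute [instance] RMod.isAddCommGroup RMod.isModule

instance (R : Type u) [Ring R] : CoeSort (RMod R) (Type u) :=
  ⟨RMod.carrier⟩

/-- Bundle a module into `RMod R`. -/
@[reducible] def RMod.of (R : Type u) [Ring R] (M : Type u) [AddCommGroup M] [Module R M] :
    RMod R := ⟨M⟩

/-- A preradical on `R`-Mod: a subfunctor of the identity functor, i.e. an assignment
`M ↦ σ(M) ≤ M` such that `f(σ(M)) ≤ σ(N)` for every `R`-linear map `f : M → N`. -/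
structure Preradical (R : Type u) [Ring R] : Type (u + 1) where
  app : ∀ M : RMod R, Submodule R (M : Type u)
  map_le : ∀ {M N : RMod R} (f : (M : Type u) →ₗ[R] (N : Type u)),
    (app M).map f ≤ app N

namespace Preradical

variable {R : Type u} [Ring R]

/-- `σ` evaluated on an unbundled module. -/
@[reducible] def ap (σ : Preradical R) (M : Type u) [AddCommGroup M] [Module R M] :
    Submodule R M :=
  σ.app (RMod.of R M)

/-- `σ` is cohereditary: `f(σ(M)) = σ(N)` for every surjective `f : M → N`. -/
def Cohereditary (σ : Preradical R) : Prop :=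
  ∀ (M N : RMod R) (f : (M : Type u) →ₗ[R] (N : Type u)), Function.Surjective f →
    (σ.app M).map f = σ.app N

/-- `σ` is a radical: `σ(M/σ(M)) = 0` for every `M`. -/
def IsRadical (σ : Preradical R) : Prop :=
  ∀ M : RMod R, σ.ap ((M : Type u) ⧸ σ.app M) = ⊥

/-- The torsion-free class `F_σ = {M : σ(M) = 0}` is closed under quotients. -/
def TorsionFreeClosedUnderQuotients (σ : Preradical R) : Prop :=
  ∀ (M N : RMod R) (f : (M : Type u) →ₗ[R] (N : Type u)), Function.Surjective f →
    σ.app M = ⊥ → σ.app N = ⊥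

/-- The submodule `σ(R)M` of `M`, generated by `{a • m : a ∈ σ(R), m ∈ M}`. -/
def idealSMulTop (σ : Preradical R) (M : RMod R) : Submodule R (M : Type u) :=
  Submodule.span R {x : (M : Type u) | ∃ a ∈ σ.ap R, ∃ m : (M : Type u), x = a • m}

/-- `σ` is left exact: `σ(A) = A ∩ σ(B)` whenever `A` is a submodule of `B`. -/
def LeftExact (σ : Preradical R) : Prop :=
  ∀ (B : RMod R) (A : Submodule R (B : Type u)),
    (σ.ap ↥A).map A.subtype = A ⊓ σ.app B

/-- `σ` centrally splits: there is a central idempotent `e ∈ R` with `σ(M) = eM`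
for every module `M`. -/
def CentrallySplits (σ : Preradical R) : Prop :=
  ∃ e : R, e ∈ Set.center R ∧ e * e = e ∧
    ∀ M : RMod R, (σ.app M : Set (M : Type u)) = Set.range fun m : (M : Type u) => e • m

/-- `σ` is stable: `σ(E)` is a direct summand of `E` for every injective module `E`. -/
def Stable (σ : Preradical R) : Prop :=
  ∀ E : RMod R, Module.Injective R (E : Type u) →
    ∃ K : Submodule R (E : Type u), IsCompl (σ.app E) K

/-- `σ` is costable: `σ(P)` is a direct summand of `P` for every projective module `P`. -/
def Costable (σ : Preradical R) : Prop :=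
  ∀ P : RMod R, Module.Projective R (P : Type u) →
    ∃ K : Submodule R (P : Type u), IsCompl (σ.app P) K

/-- The condition `(σ-HH)`: for all modules `M`, `N` with `σ(M) ≠ 0` and `σ(N) ≠ 0`,
`Hom(σ(N), M) ≠ 0` iff `Hom(M, σ(N)) ≠ 0`. -/
def HH (σ : Preradical R) : Prop :=
  ∀ M N : RMod R, σ.app M ≠ ⊥ → σ.app N ≠ ⊥ →
    ((∃ f : ↥(σ.app N) →ₗ[R] (M : Type u), f ≠ 0) ↔
      (∃ f : (M : Type u) →ₗ[R] ↥(σ.app N), f ≠ 0))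

/-- `R` is σ-(R-Mod)-retractable: for every `M` and every `N ≤ M` with `σ(N) ≠ 0`,
`Hom(M, σ(N)) ≠ 0`. -/
def Retractable (σ : Preradical R) : Prop :=
  ∀ (M : RMod R) (N : Submodule R (M : Type u)), σ.ap ↥N ≠ ⊥ →
    ∃ f : (M : Type u) →ₗ[R] ↥(σ.ap ↥N), f ≠ 0

end Preradical

/-- `M` is parainjective: whenever `M` embeds in `N`, `M` is a quotient of `N`. -/
def Parainjective (R : Type u) [Ring R] (M : Type u) [AddCommGroup M] [Module R M] : Prop :=
  ∀ N : RMod R, (∃ f : M →ₗ[R] (N : Type u), Function.Injective f) →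
    ∃ g : (N : Type u) →ₗ[R] M, Function.Surjective g

/-- `M` is paraprojective: whenever `M` is a quotient of `N`, `M` embeds in `N`. -/
def Paraprojective (R : Type u) [Ring R] (M : Type u) [AddCommGroup M] [Module R M] : Prop :=
  ∀ N : RMod R, (∃ f : (N : Type u) →ₗ[R] M, Function.Surjective f) →
    ∃ g : M →ₗ[R] (N : Type u), Function.Injective g

namespace Preradical

variable {R : Type u} [Ring R]

/-- `R` is a left σ-max ring: every nonzero quotient `L` of any module `M` with
`σ(L) ≠ 0` has a σ-torsion simple quotient. -/
def SigmaMax (σ : Preradical R) : Prop :=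
  ∀ (M L : RMod R) (f : (M : Type u) →ₗ[R] (L : Type u)), Function.Surjective f →
    Nontrivial (L : Type u) → σ.app L ≠ ⊥ →
    ∃ K : Submodule R (L : Type u),
      IsSimpleModule R ((L : Type u) ⧸ K) ∧ σ.ap ((L : Type u) ⧸ K) = ⊤

/-- `R` is left σ-semiartinian: every nonzero submodule `N` of any module `M` with
`σ(N) ≠ 0` contains a σ-torsion simple submodule. -/
def SigmaSemiartinian (σ : Preradical R) : Prop :=
  ∀ (M : RMod R) (N : Submodule R (M : Type u)), N ≠ ⊥ → σ.ap ↥N ≠ ⊥ →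
    ∃ S : Submodule R (M : Type u), S ≤ N ∧ IsSimpleModule R ↥S ∧ σ.ap ↥S = ⊤

/-- `R` is a σ-(BKN)-ring: `Hom(σ(N), σ(M)) ≠ 0` for all `M`, `N` with
`σ(M) ≠ 0 ≠ σ(N)`. -/
def BKN (σ : Preradical R) : Prop :=
  ∀ M N : RMod R, σ.app M ≠ ⊥ → σ.app N ≠ ⊥ →
    ∃ f : ↥(σ.app N) →ₗ[R] ↥(σ.app M), f ≠ 0

/-- `R` is a left σ-local ring: up to isomorphism there is exactly one σ-torsion
simple module. -/
def SigmaLocal (σ : Preradical R) : Prop :=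
  (∃ S : RMod R, IsSimpleModule R (S : Type u) ∧ σ.app S = ⊤) ∧
  ∀ S T : RMod R, IsSimpleModule R (S : Type u) → σ.app S = ⊤ →
    IsSimpleModule R (T : Type u) → σ.app T = ⊤ →
    Nonempty ((S : Type u) ≃ₗ[R] (T : Type u))

end Preradical

/-- A class of modules is closed under isomorphism. -/
def RespectsIso (R : Type u) [Ring R] (C : RMod R → Prop) : Prop :=
  ∀ M N : RMod R, Nonempty ((M : Type u) ≃ₗ[R] (N : Type u)) → C M → C N

namespace Preradical

variable {R : Type u} [Ring R]

/-- `C` is a σ-cohereditary class: `F_σ ⊆ C`, and `σ(L) ∈ C` for every `M ∈ C` and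
every quotient `L` of `M`. -/
def SigmaCohereditaryClass (σ : Preradical R) (C : RMod R → Prop) : Prop :=
  (∀ M : RMod R, σ.app M = ⊥ → C M) ∧
  ∀ (M L : RMod R) (f : (M : Type u) →ₗ[R] (L : Type u)), Function.Surjective f → C M →
    C (RMod.of R ↥(σ.app L))

/-- `C` is a σ-hereditary class: `F_σ ⊆ C`, and `σ(N) ∈ C` for every `M ∈ C` and
every submodule `N ≤ M`. -/
def SigmaHereditaryClass (σ : Preradical R) (C : RMod R → Prop) : Prop :=
  (∀ M : RMod R, σ.app M = ⊥ → C M) ∧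
  ∀ (M : RMod R) (N : Submodule R (M : Type u)), C M → C (RMod.of R ↥(σ.ap ↥N))

/-- `C` is closed under arbitrary direct sums. -/
def ClassClosedUnderDirectSums (C : RMod R → Prop) : Prop :=
  ∀ (ι : Type u) (M : ι → RMod R), (∀ i, C (M i)) →
    C (RMod.of R (DirectSum ι fun i => ((M i) : Type u)))

/-- `C` is closed under extensions. -/
def ClassClosedUnderExtensions (C : RMod R → Prop) : Prop :=
  ∀ (M : RMod R) (A : Submodule R (M : Type u)),
    C (RMod.of R ↥A) → C (RMod.of R ((M : Type u) ⧸ A)) → C M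

/-- `C` is a σ-torsion class: a σ-cohereditary class closed under arbitrary direct
sums and under extensions. -/
def SigmaTorsionClass (σ : Preradical R) (C : RMod R → Prop) : Prop :=
  σ.SigmaCohereditaryClass C ∧ ClassClosedUnderDirectSums C ∧ ClassClosedUnderExtensions C

/-- `C` is a hereditary σ-torsion class. -/
def HereditarySigmaTorsionClass (σ : Preradical R) (C : RMod R → Prop) : Prop :=
  σ.SigmaTorsionClass C ∧ σ.SigmaHereditaryClass C

/-- `C` satisfies the condition `(σ-CN)`. -/
def SigmaCN (σ : Preradical R) (C : RMod R → Prop) : Prop :=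
  ∀ M : RMod R,
    (∀ (L : RMod R) (f : (M : Type u) →ₗ[R] (L : Type u)), Function.Surjective f →
      σ.app L ≠ ⊥ →
      ∃ C₀ N : RMod R, C C₀ ∧ σ.app N ≠ ⊥ ∧
        (∃ g : (L : Type u) →ₗ[R] (N : Type u), Function.Surjective g) ∧
        (∃ h : (C₀ : Type u) →ₗ[R] (N : Type u), Function.Surjective h)) →
    C M

/-- `C` satisfies the condition `(σ-N)`. -/
def SigmaN (σ : Preradical R) (C : RMod R → Prop) : Prop :=
  ∀ M : RMod R,
    (∀ L : Submodule R (M : Type u), σ.ap ↥L ≠ ⊥ →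
      ∃ C₀ N : RMod R, C C₀ ∧ σ.app N ≠ ⊥ ∧
        (∃ g : (N : Type u) →ₗ[R] ↥L, Function.Injective g) ∧
        (∃ h : (N : Type u) →ₗ[R] (C₀ : Type u), Function.Injective h)) →
    C M

/-- The pseudocomplement `D^{⊥/σ}` of a class `D`:
`{M : every quotient L of M with σ(L) ≠ 0 satisfies σ(L) ∉ D} ∪ F_σ`. -/
def Perp (σ : Preradical R) (D : RMod R → Prop) : RMod R → Prop := fun M =>
  (∀ (L : RMod R) (f : (M : Type u) →ₗ[R] (L : Type u)), Function.Surjective f →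
    σ.app L ≠ ⊥ → ¬ D (RMod.of R ↥(σ.app L))) ∨ σ.app M = ⊥

/-- `C` is a σ-natural class: there is a σ-hereditary class `A` with
`C = {M : for every N ≤ M with σ(N) ∈ A one has σ(N) = 0}`. -/
def SigmaNaturalClass (σ : Preradical R) (C : RMod R → Prop) : Prop :=
  ∃ A : RMod R → Prop, RespectsIso R A ∧ σ.SigmaHereditaryClass A ∧
    ∀ M : RMod R, C M ↔
      ∀ N : Submodule R (M : Type u), A (RMod.of R ↥(σ.ap ↥N)) → σ.ap ↥N = ⊥

end Preradical

namespace Preradical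

variable {R : Type u} [Ring R]

lemma idealSMulTop_le' (σ : Preradical R) (M : RMod R) :
    σ.idealSMulTop M ≤ σ.app M := by
  rw [idealSMulTop, Submodule.span_le]
  rintro x ⟨a, ha, m, rfl⟩
  have h := σ.map_le (M := RMod.of R R) (N := M)
    (LinearMap.toSpanSingleton R (M : Type u) m)
  exact h ⟨a, ha, by simp [LinearMap.toSpanSingleton_apply]⟩

lemma map_idealSMulTop' (σ : Preradical R) {M N : RMod R}
    (f : (M : Type u) →ₗ[R] (N : Type u)) (hf : Function.Surjective f) :
    (σ.idealSMulTop M).map f = σ.idealSMulTop N := by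
  rw [idealSMulTop, idealSMulTop, Submodule.map_span]
  congr 1
  ext x
  constructor
  · rintro ⟨y, ⟨a, ha, m, rfl⟩, rfl⟩
    exact ⟨a, ha, f m, (map_smul f a m)⟩
  · rintro ⟨a, ha, n, rfl⟩
    obtain ⟨m, rfl⟩ := hf n
    exact ⟨a • m, ⟨a, ha, m, rfl⟩, (map_smul f a m)⟩

lemma coh_eq' (σ : Preradical R) (h : σ.Cohereditary) (M : RMod R) :
    σ.app M = σ.idealSMulTop M := by
  refine le_antisymm ?_ (σ.idealSMulTop_le' M)
  set F : RMod R := RMod.of R ((M : Type u) →₀ R) with hFdef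
  let f : (F : Type u) →ₗ[R] (M : Type u) := Finsupp.linearCombination R (id : M.carrier → M.carrier)
  have hfsurj : Function.Surjective f := Finsupp.linearCombination_id_surjective R (M : Type u)
  have hF : σ.app F ≤ σ.idealSMulTop F := by
    intro x hx
    have hx' : x = ∑ m ∈ x.support, Finsupp.single m (x m) :=
      (Finsupp.sum_single x).symm
    rw [hx']
    refine Submodule.sum_mem _ fun m hm => ?_
    have hxm : x m ∈ σ.ap R :=
      σ.map_le (M := F) (N := RMod.of R R) (Finsupp.lapply m) ⟨x, hx, rfl⟩
    have hs : Finsupp.single m (x m) = (x m) • Finsupp.single m (1 : R) := by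
      rw [Finsupp.smul_single, smul_eq_mul, mul_one]
    rw [hs]
    exact Submodule.subset_span ⟨x m, hxm, Finsupp.single m 1, rfl⟩
  calc σ.app M = (σ.app F).map f := (h F M f hfsurj).symm
    _ ≤ (σ.idealSMulTop F).map f := Submodule.map_mono hF
    _ = σ.idealSMulTop M := σ.map_idealSMulTop' f hfsurj

lemma eq_coh' (σ : Preradical R) (h : ∀ M : RMod R, σ.app M = σ.idealSMulTop M) :
    σ.Cohereditary := by
  intro M N f hf
  rw [h M, h N, σ.map_idealSMulTop' f hf]

lemma coh_radical' (σ : Preradical R) (h : σ.Cohereditary) : σ.IsRadical := by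
  intro M
  have hc := h M (RMod.of R ((M : Type u) ⧸ σ.app M)) (σ.app M).mkQ
    (Submodule.mkQ_surjective _)
  have hbot : Submodule.map (σ.app M).mkQ (σ.app M) = ⊥ := by
    rw [eq_bot_iff]
    rintro x ⟨y, hy, rfl⟩
    simpa [Submodule.mkQ_apply, Submodule.Quotient.mk_eq_zero] using hy
  show σ.app (RMod.of R ((M : Type u) ⧸ σ.app M)) = ⊥
  rw [← hc]
  exact hbot

lemma coh_tf' (σ : Preradical R) (h : σ.Cohereditary) :
    σ.TorsionFreeClosedUnderQuotients := by
  intro M N f hf hM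
  rw [← h M N f hf, hM, Submodule.map_bot]

lemma rad_tf_coh' (σ : Preradical R) (hrad : σ.IsRadical)
    (htf : σ.TorsionFreeClosedUnderQuotients) : σ.Cohereditary := by
  intro M N f hf
  refine le_antisymm (σ.map_le f) ?_
  set P : Submodule R (N : Type u) := (σ.app M).map f with hP
  set Q : RMod R := RMod.of R ((N : Type u) ⧸ P) with hQdef
  let g : (M : Type u) →ₗ[R] (Q : Type u) := P.mkQ.comp f
  have hker : σ.app M ≤ LinearMap.ker g := by
    intro x hx
    simp only [g, LinearMap.mem_ker, LinearMap.comp_apply, Submodule.mkQ_apply,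
      Submodule.Quotient.mk_eq_zero]
    exact (Submodule.Quotient.mk_eq_zero P).mpr ⟨x, hx, rfl⟩
  let gbar : ((M : Type u) ⧸ σ.app M) →ₗ[R] (Q : Type u) := (σ.app M).liftQ g hker
  have hgsurj : Function.Surjective g :=
    (Submodule.mkQ_surjective P).comp hf
  have hgbar : Function.Surjective gbar := by
    intro q
    obtain ⟨m, hm⟩ := hgsurj q
    refine ⟨(σ.app M).mkQ m, ?_⟩
    simpa [gbar, Submodule.mkQ_apply, Submodule.liftQ_apply] using hm
  have hQ : σ.app Q = ⊥ :=
    htf (RMod.of R ((M : Type u) ⧸ σ.app M)) Q gbar hgbar (hrad M)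
  intro x hx
  have hmem : P.mkQ x ∈ σ.app Q :=
    σ.map_le (M := N) (N := Q) P.mkQ ⟨x, hx, rfl⟩
  rw [hQ] at hmem
  exact (Submodule.Quotient.mk_eq_zero P).mp (by simpa using hmem)

end Preradical

/-- For a preradical `σ` on `R`-Mod, the following are equivalent:
(1) `σ` is cohereditary; (2) `σ(M) = σ(R)M` for every `M`;
(3) `σ` is a radical whose torsion-free class is closed under quotients. -/
theorem cohereditary_tfae {R : Type u} [Ring R] (σ : Preradical R) :
    (σ.Cohereditary ↔ ∀ M : RMod R, σ.app M = σ.idealSMulTop M) ∧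
    (σ.Cohereditary ↔ σ.IsRadical ∧ σ.TorsionFreeClosedUnderQuotients) := by
  refine ⟨⟨σ.coh_eq', σ.eq_coh'⟩, ⟨fun h => ⟨σ.coh_radical' h, σ.coh_tf' h⟩,
    fun ⟨h1, h2⟩ => σ.rad_tf_coh' h1 h2⟩⟩
end

section
/- For a preradical σ on R-Mod the following are equivalent: (1) σ is left exact and cohereditary, and σ(R) is a direct summand of R as a left R-module; (2) σ centrally splits, i.e. there is a central idempotent e ∈ R with σ(M) = eM for every R-module M. -/
/-! Basic framework: bundled left `R`-modules (in the same universe as `R`),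
preradicals on `R`-Mod, and the notions from the paper
"On σ-classes of modules with applications". -/

universe u

/-- Auxiliary: if the image of a submodule's σ under the subtype is `⊥`, then it is `⊥`. -/
private lemma aux_map_subtype_bot {R : Type u} [Ring R] {M : Type u} [AddCommGroup M]
    [Module R M] {p : Submodule R M} {q : Submodule R ↥p}
    (h : q.map p.subtype = ⊥) : q = ⊥ := by
  rw [eq_bot_iff]
  intro x hx
  have hm : p.subtype x ∈ q.map p.subtype := Submodule.mem_map_of_mem hx
  rw [h, Submodule.mem_bot] at hm
  rw [Submodule.mem_bot]
  exact Subtype.ext hm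

/-- Auxiliary: the image of a σ-torsionfree module meets σ trivially
(for σ left exact and cohereditary). -/
private lemma aux_range_inf_bot {R : Type u} [Ring R] (σ : Preradical R)
    (hLE : σ.LeftExact) (hCoh : σ.Cohereditary)
    (N M : RMod R) (hN : σ.app N = ⊥) (g : (N : Type u) →ₗ[R] (M : Type u)) :
    LinearMap.range g ⊓ σ.app M = ⊥ := by
  have h1 := hCoh N (RMod.of R ↥(LinearMap.range g)) g.rangeRestrict
      g.surjective_rangeRestrict
  rw [hN, Submodule.map_bot] at h1
  have h2 := hLE M (LinearMap.range g)
  rw [show σ.ap ↥(LinearMap.range g) = ⊥ from h1.symm, Submodule.map_bot] at h2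
  exact h2.symm

/-- `σ` is left exact and cohereditary with `σ(R)` a direct summand of `R`
iff `σ` centrally splits. -/
theorem centrallySplits_iff {R : Type u} [Ring R] (σ : Preradical R) :
    (σ.LeftExact ∧ σ.Cohereditary ∧ ∃ K : Submodule R R, IsCompl (σ.ap R) K) ↔
      σ.CentrallySplits := by
  constructor
  · rintro ⟨hLE, hCoh, K, hK⟩
    -- σ(K) = 0
    have hσK : σ.ap ↥K = ⊥ := by
      apply aux_map_subtype_bot
      have h := hLE (RMod.of R R) K
      rw [h, inf_comm, hK.disjoint.eq_bot]
    -- K * σ(R) = 0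
    have hKI : ∀ k ∈ K, ∀ a ∈ σ.ap R, k * a = 0 := by
      intro k hk a ha
      set g : ↥K →ₗ[R] R := (LinearMap.toSpanSingleton R R a).comp K.subtype with hg
      have hrange : LinearMap.range g ≤ σ.ap R := by
        rintro x ⟨y, rfl⟩
        exact Submodule.smul_mem _ _ ha
      have h0 : LinearMap.range g = ⊥ := by
        have := aux_range_inf_bot σ hLE hCoh (RMod.of R ↥K) (RMod.of R R) hσK g
        rw [inf_eq_left.mpr hrange] at this
        exact this
      have h1 : g ⟨k, hk⟩ = 0 := by
        have := LinearMap.mem_range_self g ⟨k, hk⟩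
        rw [h0, Submodule.mem_bot] at this
        exact this
      rw [hg] at h1
      simp only [LinearMap.comp_apply, Submodule.coe_subtype,
        LinearMap.toSpanSingleton_apply, smul_eq_mul] at h1
      exact h1
    -- σ(R) * K = 0
    have hIK : ∀ a ∈ σ.ap R, ∀ k ∈ K, a * k = 0 := by
      intro a ha k hk
      have hmap := σ.map_le (M := RMod.of R R) (N := RMod.of R ↥K)
        (LinearMap.toSpanSingleton R ↥K ⟨k, hk⟩)
      have : LinearMap.toSpanSingleton R ↥K ⟨k, hk⟩ a ∈ σ.ap ↥K :=
        hmap (Submodule.mem_map_of_mem ha)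
      rw [hσK] at this
      have h2 : a • (⟨k, hk⟩ : ↥K) = 0 := this
      have := congrArg Subtype.val h2
      simpa [smul_eq_mul] using this
    -- decompose 1 = e + f
    obtain ⟨e, he, f, hf, hef⟩ := Submodule.mem_sup.1
      (by rw [hK.codisjoint.eq_top]; trivial : (1 : R) ∈ σ.ap R ⊔ K)
    -- e is idempotent
    have hee : e * e = e := by
      have : e * e + e * f = e := by rw [← mul_add, hef, mul_one]
      rw [hIK e he f hf, add_zero] at this
      exact this
    -- e is central
    have hcentral : ∀ r : R, e * r = r * e := by
      intro r
      have h1 : r * e = e * (r * e) := by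
        have hre : r * e ∈ σ.ap R := by
          have := Submodule.smul_mem (σ.ap R) r he
          simpa [smul_eq_mul] using this
        have : e * (r * e) + f * (r * e) = r * e := by
          rw [← add_mul, hef, one_mul]
        rw [hKI f hf _ hre, add_zero] at this
        exact this.symm
      have h2 : e * r = e * (r * e) := by
        have hrf : r * f ∈ K := by
          have := Submodule.smul_mem K r hf
          simpa [smul_eq_mul] using this
        have h3 : e * (r * e) + e * (r * f) = e * r := by
          rw [← mul_add, ← mul_add, hef, mul_one]
        rw [hIK e he _ hrf, add_zero] at h3
        exact h3.symm
      rw [h2]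
      exact h1.symm
    refine ⟨e, ?_, hee, ?_⟩
    · exact Semigroup.mem_center_iff.mpr fun g => (hcentral g).symm
    · intro M
      -- e • m ∈ σ(M) for all m
      have hsub : ∀ m : (M : Type u), e • m ∈ σ.app M := by
        intro m
        have hmap := σ.map_le (M := RMod.of R R) (N := M)
          (LinearMap.toSpanSingleton R (M : Type u) m)
        exact hmap (Submodule.mem_map_of_mem he)
      ext x
      simp only [SetLike.mem_coe, Set.mem_range]
      constructor
      · intro hx
        set y := x - e • x with hy
        have hyσ : y ∈ σ.app M := Submodule.sub_mem _ hx (hsub x)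
        have hey : e • y = 0 := by
          rw [hy, smul_sub, smul_smul, hee, sub_self]
        set g : ↥K →ₗ[R] (M : Type u) :=
          (LinearMap.toSpanSingleton R (M : Type u) y).comp K.subtype with hg
        have hyr : y ∈ LinearMap.range g := by
          refine ⟨⟨f, hf⟩, ?_⟩
          have : f • y = (1 - e) • y := by rw [← hef, add_sub_cancel_left]
          simp only [hg, LinearMap.comp_apply, Submodule.coe_subtype,
            LinearMap.toSpanSingleton_apply]
          rw [this, sub_smul, one_smul, hey, sub_zero]
        have h0 := aux_range_inf_bot σ hLE hCoh (RMod.of R ↥K) M hσK g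
        have : y ∈ (⊥ : Submodule R (M : Type u)) := by
          rw [← h0]; exact ⟨hyr, hyσ⟩
        have hy0 : y = 0 := this
        rw [hy] at hy0
        exact ⟨x, (sub_eq_zero.mp hy0).symm⟩
      · rintro ⟨m, rfl⟩
        exact hsub m
  · rintro ⟨e, hce, hee, hM⟩
    have hcomm : ∀ r : R, r * e = e * r := fun r => Semigroup.mem_center_iff.mp hce r
    have hmem : ∀ (M : RMod R) (x : (M : Type u)), x ∈ σ.app M ↔ ∃ m, e • m = x := by
      intro M x
      rw [← SetLike.mem_coe, hM M]
      exact Iff.rfl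
    refine ⟨?_, ?_, ?_⟩
    · -- left exact
      intro B A
      ext x
      simp only [Submodule.mem_map, Submodule.mem_inf]
      constructor
      · rintro ⟨y, hy, rfl⟩
        obtain ⟨a, ha⟩ := (hmem (RMod.of R ↥A) y).1 hy
        refine ⟨y.2, (hmem B _).2 ⟨(a : (B : Type u)), ?_⟩⟩
        have := congrArg Subtype.val ha
        simpa using this
      · rintro ⟨hxA, hxσ⟩
        obtain ⟨b, hb⟩ := (hmem B x).1 hxσ
        refine ⟨⟨x, hxA⟩, (hmem (RMod.of R ↥A) _).2 ⟨⟨x, hxA⟩, ?_⟩, rfl⟩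
        apply Subtype.ext
        show e • x = x
        rw [← hb, smul_smul, hee]
    · -- cohereditary
      intro M N g hg
      ext x
      simp only [Submodule.mem_map]
      constructor
      · rintro ⟨y, hy, rfl⟩
        obtain ⟨m, hm⟩ := (hmem M y).1 hy
        exact (hmem N _).2 ⟨g m, by rw [← hm, map_smul]⟩
      · intro hx
        obtain ⟨n, hn⟩ := (hmem N x).1 hx
        obtain ⟨m, hm⟩ := hg n
        refine ⟨e • m, (hmem M _).2 ⟨m, rfl⟩, ?_⟩
        rw [map_smul, hm, hn]
    · -- σ(R) is a direct summand
      refine ⟨LinearMap.range (LinearMap.toSpanSingleton R R (1 - e)), ?_, ?_⟩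
      · rw [Submodule.disjoint_def]
        intro x hxI hxK
        obtain ⟨r, hr⟩ := (hmem (RMod.of R R) x).1 hxI
        obtain ⟨s, hs⟩ := hxK
        have hr' : e * r = x := by rw [← hr]; rfl
        have hs' : s * (1 - e) = x := by rw [← hs]; rfl
        have h1 : e * x = x := by rw [← hr', ← mul_assoc, hee]
        have h2 : e * x = 0 := by
          rw [← hs', ← mul_assoc, ← hcomm s, mul_assoc, mul_sub, mul_one, hee, sub_self,
            mul_zero]
        rw [← h1, h2]
      · rw [codisjoint_iff, eq_top_iff]
        intro x _
        apply Submodule.mem_sup.2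
        refine ⟨e * x, (hmem (RMod.of R R) _).2 ⟨x, by rw [smul_eq_mul]⟩,
          x * (1 - e), ⟨x, by rw [LinearMap.toSpanSingleton_apply, smul_eq_mul]⟩, ?_⟩
        rw [mul_sub, mul_one, ← hcomm x]
        abel
end

section
/- For a preradical σ on R-Mod the following are equivalent: (1) σ is exact (i.e. left exact and cohereditary) and stable; (2) σ centrally splits; (3) σ is exact and costable. -/
/-! Basic framework: bundled left `R`-modules (in the same universe as `R`),
preradicals on `R`-Mod, and the notions from the paper
"On σ-classes of modules with applications". -/

universe u

/-! ### Auxiliary lemmas for the proof -/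

section AuxProof

variable {R : Type u} [Ring R] (σ : Preradical R)

/-- `σ(R)` is a right ideal. -/
lemma Preradical.apR_mul_mem {a : R} (ha : a ∈ σ.ap R) (r : R) : a * r ∈ σ.ap R := by
  have h := σ.map_le (M := RMod.of R R) (N := RMod.of R R) (LinearMap.toSpanSingleton R R r)
  have h2 : a • r ∈ (σ.ap R).map (LinearMap.toSpanSingleton R R r) :=
    Submodule.mem_map_of_mem ha
  simpa [smul_eq_mul] using h h2

/-- For an exact preradical, every element `t` of `σ(M)` satisfies `t ∈ σ(R)·t`. -/
lemma Preradical.exists_smul_eq_self (hle : σ.LeftExact) (hco : σ.Cohereditary)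
    (M : RMod R) {t : (M : Type u)} (ht : t ∈ σ.app M) :
    ∃ a ∈ σ.ap R, a • t = t := by
  set A : Submodule R (M : Type u) := Submodule.span R {t} with hA
  have htA : t ∈ A := Submodule.mem_span_singleton_self t
  have hAle : A ≤ σ.app M := (Submodule.span_le).2 (Set.singleton_subset_iff.2 ht)
  have h1 : (σ.ap ↥A).map A.subtype = A := by
    rw [hle M A]; exact inf_eq_left.2 hAle
  have h2 : σ.ap ↥A = ⊤ := by
    apply Submodule.map_injective_of_injective A.injective_subtype
    rw [h1, Submodule.map_subtype_top]
  let f : R →ₗ[R] ↥A := LinearMap.codRestrict A (LinearMap.toSpanSingleton R (M : Type u) t)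
      (fun r => by simpa using A.smul_mem r htA)
  have hf : Function.Surjective f := by
    rintro ⟨x, hx⟩
    obtain ⟨a, rfl⟩ := Submodule.mem_span_singleton.1 hx
    exact ⟨a, rfl⟩
  have h3 := hco (RMod.of R R) (RMod.of R ↥A) f hf
  have h4 : (⟨t, htA⟩ : ↥A) ∈ (σ.ap R).map f := by
    rw [show (σ.ap R).map f = σ.app (RMod.of R ↥A) from h3]
    rw [show σ.app (RMod.of R ↥A) = σ.ap ↥A from rfl, h2]
    trivial
  obtain ⟨a, ha, hat⟩ := h4
  refine ⟨a, ha, ?_⟩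
  have h5 := congrArg Subtype.val hat
  simpa [f] using h5

/-- From an idempotent-like generator of `σ(R)`, exactness gives a central splitting. -/
lemma Preradical.centrallySplits_of_gen (hle : σ.LeftExact) (hco : σ.Cohereditary)
    {e : R} (he : e ∈ σ.ap R) (hid : ∀ x ∈ σ.ap R, x * e = x) :
    σ.CentrallySplits := by
  have hee : e * e = e := hid e he
  have hcomm : ∀ r : R, r * e = e * r := by
    intro r
    have h1 : e * r * e = e * r := hid _ (σ.apR_mul_mem he r)
    have htI : r * e - e * r * e ∈ σ.ap R := by
      refine Submodule.sub_mem _ ?_ (σ.apR_mul_mem (σ.apR_mul_mem he r) e)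
      simpa [smul_eq_mul] using (σ.ap R).smul_mem r he
    have het : e * (r * e - e * r * e) = 0 := by
      simp [mul_sub, ← mul_assoc, hee]
    obtain ⟨a, ha, hat⟩ := σ.exists_smul_eq_self hle hco (RMod.of R R) htI
    have hae : a * e = a := hid a ha
    have hat' : a * (r * e - e * r * e) = r * e - e * r * e := by
      simpa [smul_eq_mul] using hat
    have ht0 : r * e - e * r * e = 0 := by
      rw [← hat', ← hae, mul_assoc, het, mul_zero]
    have h6 : r * e = e * r * e := sub_eq_zero.mp ht0
    rw [h6, h1]
  refine ⟨e, Semigroup.mem_center_iff.mpr hcomm, hee, ?_⟩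
  intro M
  ext x
  simp only [Set.mem_range, SetLike.mem_coe]
  constructor
  · intro hx
    obtain ⟨a, ha, hax⟩ := σ.exists_smul_eq_self hle hco M hx
    have hae : a * e = a := hid a ha
    refine ⟨x, ?_⟩
    calc e • x = e • (a • x) := by rw [hax]
      _ = (e * a) • x := smul_smul e a x
      _ = (a * e) • x := by rw [hcomm a]
      _ = a • x := by rw [hae]
      _ = x := hax
  · rintro ⟨m, rfl⟩
    have h := σ.map_le (M := RMod.of R R) (N := M) (LinearMap.toSpanSingleton R (M : Type u) m)
    exact h (Submodule.mem_map.2 ⟨e, he, by simp⟩)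

/-- A costable preradical has a suitable generator of `σ(R)`. -/
lemma Preradical.costable_gen (hcost : σ.Costable) :
    ∃ e ∈ σ.ap R, ∀ x ∈ σ.ap R, x * e = x := by
  obtain ⟨K, hK⟩ := hcost (RMod.of R R) inferInstance
  set I : Submodule R R := σ.ap R with hI
  let p := I.linearProjOfIsCompl K hK
  refine ⟨(p 1 : R), (p 1).2, fun x hx => ?_⟩
  have h1 : p x = ⟨x, hx⟩ := Submodule.linearProjOfIsCompl_apply_left hK ⟨x, hx⟩
  have h2 : p x = x • p 1 := by
    conv_lhs => rw [show x = x • (1 : R) by simp]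
    rw [map_smul]
  have h3 : (⟨x, hx⟩ : I) = x • p 1 := by rw [← h1, h2]
  have h4 := congrArg Subtype.val h3
  simpa [smul_eq_mul] using h4.symm

/-- Every module embeds into an injective module (in the same universe). -/
lemma exists_injective_embedding (M : Type u) [AddCommGroup M] [Module R M] :
    ∃ (E : Type u) (_ : AddCommGroup E) (_ : Module R E) (j : M →ₗ[R] E),
      Module.Injective R E ∧ Function.Injective j := by
  let X : ModuleCat.{u} R := ModuleCat.of R M
  let E := CategoryTheory.Injective.under X
  haveI hI : CategoryTheory.Injective (ModuleCat.of R (E : Type u)) :=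
    (inferInstance : CategoryTheory.Injective E)
  refine ⟨E, inferInstance, inferInstance,
    ((CategoryTheory.Injective.ι X).hom : M →ₗ[R] (E : Type u)), ?_, ?_⟩
  · exact Module.injective_module_of_injective_object R E
  · exact (ModuleCat.mono_iff_injective (CategoryTheory.Injective.ι X)).mp inferInstance

/-- A direct summand of an injective module is injective. -/
lemma Module.Injective.of_isCompl {E : Type u} [AddCommGroup E] [Module R E]
    (hE : Module.Injective R E) (T K : Submodule R E) (hTK : IsCompl T K) :
    Module.Injective R (↥T) where
  out X Y _ _ _ _ f hf g := by
    obtain ⟨h, hh⟩ := hE.out f hf (T.subtype ∘ₗ g)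
    refine ⟨T.linearProjOfIsCompl K hTK ∘ₗ h, fun x => ?_⟩
    have hx : h (f x) = T.subtype (g x) := hh x
    simp only [LinearMap.comp_apply, hx]
    exact Submodule.linearProjOfIsCompl_apply_left hTK (g x)

/-- An exact stable preradical has a suitable generator of `σ(R)`. -/
lemma Preradical.stable_gen (hle : σ.LeftExact) (hco : σ.Cohereditary) (hst : σ.Stable) :
    ∃ e ∈ σ.ap R, ∀ x ∈ σ.ap R, x * e = x := by
  obtain ⟨E, _, _, j, hEinj, hj⟩ := exists_injective_embedding (R := R) R
  obtain ⟨K, hK⟩ := hst (RMod.of R E) hEinj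
  set T : Submodule R E := σ.ap E with hT
  have hTtor : σ.ap ↥T = ⊤ := by
    apply Submodule.map_injective_of_injective T.injective_subtype
    rw [hle (RMod.of R E) T, Submodule.map_subtype_top]
    exact inf_idem _
  have hTinj : Module.Injective R ↥T := Module.Injective.of_isCompl hEinj T K hK
  set I : Submodule R R := σ.ap R with hI
  have hjI : ∀ x : ↥I, j ((x : R)) ∈ T := by
    rintro ⟨x, hx⟩
    exact σ.map_le (M := RMod.of R R) (N := RMod.of R E) j (Submodule.mem_map_of_mem hx)
  let ι : ↥I →ₗ[R] ↥T := LinearMap.codRestrict T (j ∘ₗ I.subtype) (fun x => hjI x)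
  have hιinj : Function.Injective ι := by
    intro x y hxy
    have h0 := congrArg Subtype.val hxy
    simp only [ι, LinearMap.codRestrict_apply, LinearMap.comp_apply] at h0
    exact Subtype.ext (hj h0)
  obtain ⟨g, hg⟩ := hTinj.out I.subtype I.injective_subtype ι
  set τ : ↥T := g 1 with hτ
  have hsm : ∀ x : ↥I, (x : R) • τ = ι x := by
    intro x
    have h0 : g ((x : R) • (1 : R)) = (x : R) • τ := by rw [map_smul, hτ]
    rw [← h0, smul_eq_mul, mul_one]
    exact hg x
  have hτT : τ ∈ σ.app (RMod.of R ↥T) := by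
    rw [show σ.app (RMod.of R ↥T) = σ.ap ↥T from rfl, hTtor]; trivial
  obtain ⟨a, ha, haτ⟩ := σ.exists_smul_eq_self hle hco (RMod.of R ↥T) hτT
  refine ⟨a, ha, fun x hx => ?_⟩
  have h1 : ι ⟨x, hx⟩ = x • τ := (hsm ⟨x, hx⟩).symm
  have h2 : x • τ = x • (a • τ) := by rw [haτ]
  have h3 : x • (a • τ) = (x * a) • τ := smul_smul x a τ
  have h4 : (x * a) • τ = ι ⟨x * a, σ.apR_mul_mem hx a⟩ :=
    hsm ⟨x * a, σ.apR_mul_mem hx a⟩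
  have h5 : ι ⟨x, hx⟩ = ι ⟨x * a, σ.apR_mul_mem hx a⟩ := by rw [h1, h2, h3, h4]
  have h6 := congrArg Subtype.val (hιinj h5)
  exact h6.symm

/-- A centrally splitting preradical is left exact, cohereditary, and `σ(M)` is a direct
summand of `M` for every `M`. -/
lemma Preradical.ofCentrallySplits (h : σ.CentrallySplits) :
    σ.LeftExact ∧ σ.Cohereditary ∧ ∀ M : RMod R, ∃ K, IsCompl (σ.app M) K := by
  obtain ⟨e, hc, hee, hM⟩ := h
  have hcomm : ∀ r : R, e * r = r * e := fun r => (Semigroup.mem_center_iff.mp hc r).symm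
  have hsm : ∀ (M : RMod R) (x : (M : Type u)), x ∈ σ.app M ↔ e • x = x := by
    intro M x
    constructor
    · intro hx
      have hx' : x ∈ (σ.app M : Set (M : Type u)) := hx
      rw [hM M] at hx'
      obtain ⟨m, rfl⟩ := hx'
      rw [smul_smul, hee]
    · intro hx
      have hx' : x ∈ (σ.app M : Set (M : Type u)) := by rw [hM M]; exact ⟨x, hx⟩
      exact hx'
  refine ⟨?_, ?_, ?_⟩
  · intro B A
    ext x
    simp only [Submodule.mem_map, Submodule.mem_inf]
    constructor
    · rintro ⟨⟨y, hyA⟩, hy, rfl⟩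
      have h1 : e • (⟨y, hyA⟩ : ↥A) = ⟨y, hyA⟩ := (hsm (RMod.of R ↥A) _).1 hy
      have h2 : e • y = y := congrArg Subtype.val h1
      exact ⟨hyA, (hsm B y).2 h2⟩
    · rintro ⟨hxA, hxσ⟩
      have h2 : e • x = x := (hsm B x).1 hxσ
      exact ⟨⟨x, hxA⟩, (hsm (RMod.of R ↥A) _).2 (Subtype.ext h2), rfl⟩
  · intro M N f hf
    ext x
    simp only [Submodule.mem_map]
    constructor
    · rintro ⟨y, hy, rfl⟩
      exact (hsm N _).2 (by rw [← map_smul, (hsm M y).1 hy])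
    · intro hx
      obtain ⟨m, rfl⟩ := hf x
      refine ⟨e • m, (hsm M _).2 (by rw [smul_smul, hee]), ?_⟩
      rw [map_smul]
      exact (hsm N _).1 hx
  · intro M
    refine ⟨{ carrier := {m : (M : Type u) | e • m = 0},
              add_mem' := fun ha hb => by
                simp only [Set.mem_setOf_eq] at *
                rw [smul_add, ha, hb, add_zero],
              zero_mem' := by simp,
              smul_mem' := fun r x hx => by
                simp only [Set.mem_setOf_eq] at *
                rw [smul_smul, hcomm, ← smul_smul, hx, smul_zero] }, ?_, ?_⟩
    · rw [Submodule.disjoint_def]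
      intro x hx1 hx2
      have h1 : e • x = x := (hsm M x).1 hx1
      have h2 : e • x = 0 := hx2
      rw [← h1, h2]
    · rw [codisjoint_iff, eq_top_iff]
      intro x _
      apply Submodule.mem_sup.2
      refine ⟨e • x, (hsm M _).2 (by rw [smul_smul, hee]), x - e • x, ?_, by abel⟩
      show e • (x - e • x) = 0
      rw [smul_sub, smul_smul, hee, sub_self]

end AuxProof


/-- TFAE: (1) `σ` is exact and stable; (2) `σ` centrally splits;
(3) `σ` is exact and costable. -/
theorem exact_stable_iff_centrallySplits_iff_exact_costable {R : Type u} [Ring R]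
    (σ : Preradical R) :
    ((σ.LeftExact ∧ σ.Cohereditary) ∧ σ.Stable ↔ σ.CentrallySplits) ∧
    (σ.CentrallySplits ↔ (σ.LeftExact ∧ σ.Cohereditary) ∧ σ.Costable) := by
  have easy : σ.CentrallySplits →
      σ.LeftExact ∧ σ.Cohereditary ∧ ∀ M : RMod R, ∃ K, IsCompl (σ.app M) K :=
    σ.ofCentrallySplits
  constructor
  · constructor
    · rintro ⟨⟨hle, hco⟩, hst⟩
      obtain ⟨e, he, hid⟩ := σ.stable_gen hle hco hst
      exact σ.centrallySplits_of_gen hle hco he hid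
    · intro hcs
      obtain ⟨hle, hco, hsum⟩ := easy hcs
      exact ⟨⟨hle, hco⟩, fun E _ => hsum E⟩
  · constructor
    · intro hcs
      obtain ⟨hle, hco, hsum⟩ := easy hcs
      exact ⟨⟨hle, hco⟩, fun P _ => hsum P⟩
    · rintro ⟨⟨hle, hco⟩, hcost⟩
      obtain ⟨e, he, hid⟩ := σ.costable_gen hcost
      exact σ.centrallySplits_of_gen hle hco he hid
end

section
/- Let σ be a left exact preradical on R-Mod. If every σ-torsion simple module is parainjective, then R is a left σ-max ring. -/
/-! Basic framework: bundled left `R`-modules (in the same universe as `R`),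
preradicals on `R`-Mod, and the notions from the paper
"On σ-classes of modules with applications". -/

universe u

section Proof

variable {R : Type u} [Ring R]

lemma Preradical.ap_top_of_surjective (σ : Preradical R)
    {M N : Type u} [AddCommGroup M] [Module R M] [AddCommGroup N] [Module R N]
    (f : M →ₗ[R] N) (hf : Function.Surjective f) (hM : σ.ap M = ⊤) : σ.ap N = ⊤ := by
  have hle : Submodule.map f (σ.ap M) ≤ σ.ap N :=
    σ.map_le (M := RMod.of R M) (N := RMod.of R N) f
  rw [hM, Submodule.map_top, LinearMap.range_eq_top.mpr hf] at hle
  exact top_le_iff.mp hle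

end Proof

/-- If `σ` is left exact and every σ-torsion simple module is
parainjective, then `R` is a left σ-max ring. -/
theorem sigmaMax_of_parainjective {R : Type u} [Ring R] (σ : Preradical R)
    (hle : σ.LeftExact)
    (h : ∀ S : RMod R, IsSimpleModule R (S : Type u) → σ.app S = ⊤ →
      Parainjective R (S : Type u)) :
    σ.SigmaMax := by
  intro M L f hf _ hσL
  obtain ⟨x, hx, hx0⟩ := (Submodule.ne_bot_iff _).mp hσL
  set φ : R →ₗ[R] (L : Type u) := LinearMap.toSpanSingleton R _ x with hφ
  set N : Submodule R (L : Type u) := LinearMap.range φ with hN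
  have hNle : N ≤ σ.app L := by
    rintro _ ⟨r, rfl⟩
    exact (σ.app L).smul_mem r hx
  -- σ(N) = ⊤ by left exactness
  have hσN : σ.ap ↥N = ⊤ := by
    have h1 := hle L N
    rw [inf_eq_left.mpr hNle] at h1
    have h2 : (⊤ : Submodule R ↥N).map N.subtype = N := by
      rw [Submodule.map_top, Submodule.range_subtype]
    exact Submodule.map_injective_of_injective N.injective_subtype (h1.trans h2.symm)
  -- find a maximal left ideal containing the annihilator-like kernel
  set I : Ideal R := LinearMap.ker φ with hI
  have hIne : I ≠ ⊤ := by
    intro htop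
    apply hx0
    have h1 : (1 : R) ∈ I := htop ▸ Submodule.mem_top
    simpa [hI, hφ, LinearMap.mem_ker] using h1
  obtain ⟨m, hm, hIm⟩ := Ideal.exists_le_maximal I hIne
  set S := R ⧸ m with hSdef
  have hS : IsSimpleModule R S := isSimpleModule_iff_isCoatom.mpr hm.out
  -- σ(S) = ⊤
  have e : (R ⧸ I) ≃ₗ[R] ↥N := φ.quotKerEquivRange
  have hσT : σ.ap (R ⧸ I) = ⊤ :=
    σ.ap_top_of_surjective e.symm.toLinearMap e.symm.surjective hσN
  set g : (R ⧸ I) →ₗ[R] S := Submodule.liftQ I ((m : Submodule R R).mkQ)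
    (by rwa [Submodule.ker_mkQ]) with hg
  have hgsurj : Function.Surjective g := by
    intro s
    obtain ⟨r, rfl⟩ := Submodule.mkQ_surjective (m : Submodule R R) s
    exact ⟨Submodule.mkQ I r, rfl⟩
  have hσS : σ.ap S = ⊤ := σ.ap_top_of_surjective g hgsurj hσT
  -- pushout construction
  set p : ↥N →ₗ[R] S := g ∘ₗ e.symm.toLinearMap with hp
  have hpsurj : Function.Surjective p := hgsurj.comp e.symm.surjective
  set j : ↥N →ₗ[R] (Prod (L : Type u) S) := LinearMap.prod N.subtype (-p) with hj
  set W : Submodule R (Prod (L : Type u) S) := LinearMap.range j with hW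
  set ιL : (L : Type u) →ₗ[R] ((Prod (L : Type u) S) ⧸ W) :=
    W.mkQ ∘ₗ LinearMap.inl R _ _ with hιL
  set ιS : S →ₗ[R] ((Prod (L : Type u) S) ⧸ W) := W.mkQ ∘ₗ LinearMap.inr R _ _ with hιS
  have hιSinj : Function.Injective ιS := by
    rw [← LinearMap.ker_eq_bot, Submodule.eq_bot_iff]
    intro s hs
    have hmem : ((0 : (L : Type u)), s) ∈ W := by
      simpa [hιS, Submodule.Quotient.mk_eq_zero] using hs
    obtain ⟨n, hn⟩ := hmem
    have hn1 : (n : (L : Type u)) = 0 := congrArg Prod.fst hn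
    have hn0 : n = 0 := Subtype.ext hn1
    have hn2 : -p n = s := congrArg Prod.snd hn
    rw [hn0] at hn2
    simpa using hn2.symm
  have hιLsurj : Function.Surjective ιL := by
    intro q
    obtain ⟨⟨l, s⟩, rfl⟩ := Submodule.mkQ_surjective W q
    obtain ⟨n, hn⟩ := hpsurj s
    refine ⟨l + n, ?_⟩
    have hd : ((l + (n : (L : Type u)), (0 : S)) : Prod (L : Type u) S) - (l, s) = j n := by
      ext
      · simp [hj]
      · simp [hj, hn]
    show W.mkQ (l + (n : (L : Type u)), 0) = W.mkQ (l, s)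
    rw [Submodule.mkQ_apply, Submodule.mkQ_apply, Submodule.Quotient.eq, hd]
    exact LinearMap.mem_range_self j n
  -- apply parainjectivity of S
  have hpara := h (RMod.of R S) hS hσS (RMod.of R ((Prod (L : Type u) S) ⧸ W)) ⟨ιS, hιSinj⟩
  obtain ⟨G, hG⟩ := hpara
  set F : (L : Type u) →ₗ[R] S := G ∘ₗ ιL with hF
  have hFsurj : Function.Surjective F := hG.comp hιLsurj
  refine ⟨LinearMap.ker F, ?_, ?_⟩
  · have eF : ((L : Type u) ⧸ LinearMap.ker F) ≃ₗ[R] S := F.quotKerEquivOfSurjective hFsurj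
    haveI := hS
    exact IsSimpleModule.congr eF
  · exact σ.ap_top_of_surjective (F.quotKerEquivOfSurjective hFsurj).symm.toLinearMap
      (F.quotKerEquivOfSurjective hFsurj).symm.surjective hσS
end

section
/- Let σ be a left exact preradical on R-Mod. If every σ-torsion simple module is paraprojective, then R is a left σ-semiartinian ring. -/
/-! Basic framework: bundled left `R`-modules (in the same universe as `R`),
preradicals on `R`-Mod, and the notions from the paper
"On σ-classes of modules with applications". -/

universe u

/-- If `σ` is left exact and every σ-torsion simple module is
paraprojective, then `R` is a left σ-semiartinian ring. -/
theorem sigmaSemiartinian_of_paraprojective {R : Type u} [Ring R] (σ : Preradical R)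
    (hle : σ.LeftExact)
    (h : ∀ S : RMod R, IsSimpleModule R (S : Type u) → σ.app S = ⊤ →
      Paraprojective R (S : Type u)) :
    σ.SigmaSemiartinian := by
  intro M N _hN hσ
  -- pick nonzero x ∈ σ(N)
  obtain ⟨x, hx, hx0⟩ := Submodule.exists_mem_ne_zero_of_ne_bot hσ
  -- the cyclic submodule C = Rx of N
  set χ : R →ₗ[R] ↥N := LinearMap.toSpanSingleton R ↥N x with hχ
  set C : Submodule R ↥N := LinearMap.range χ with hC
  have hCle : C ≤ σ.ap ↥N := by
    rintro y ⟨r, rfl⟩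
    exact Submodule.smul_mem _ r hx
  -- σ(C) = ⊤ by left exactness
  have hCtop : σ.ap ↥C = ⊤ := by
    have h1 := hle (RMod.of R ↥N) C
    have h2 : C ⊓ σ.app (RMod.of R ↥N) = C := inf_eq_left.mpr hCle
    rw [h2] at h1
    have h3 : (σ.ap ↥C).map C.subtype = (⊤ : Submodule R ↥C).map C.subtype := by
      rw [h1, Submodule.map_top, Submodule.range_subtype]
    exact Submodule.map_injective_of_injective C.injective_subtype h3
  -- a maximal left ideal above ker χ
  have hker : LinearMap.ker χ ≠ ⊤ := by
    intro ht
    apply hx0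
    have : (1 : R) ∈ LinearMap.ker χ := ht ▸ Submodule.mem_top
    simpa [hχ, LinearMap.toSpanSingleton] using this
  obtain ⟨m, hm, hkm⟩ := (eq_top_or_exists_le_coatom (LinearMap.ker χ)).resolve_left hker
  -- S' = R ⧸ m is a σ-torsion simple module which is a quotient of C
  haveI hS' : IsSimpleModule R (R ⧸ m) := isSimpleModule_iff_isCoatom.mpr hm
  have hmkQ : LinearMap.ker χ ≤ LinearMap.ker m.mkQ := by
    rwa [Submodule.ker_mkQ]
  set f : ↥C →ₗ[R] (R ⧸ m) :=
    (Submodule.liftQ (LinearMap.ker χ) m.mkQ hmkQ).comp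
      (LinearMap.quotKerEquivRange χ).symm.toLinearMap with hf
  have hfsurj : Function.Surjective f := by
    rw [hf, LinearMap.coe_comp, LinearEquiv.coe_coe]
    refine Function.Surjective.comp ?_ (LinearEquiv.surjective _)
    intro y
    obtain ⟨r, rfl⟩ := m.mkQ_surjective y
    exact ⟨Submodule.Quotient.mk r, rfl⟩
  have hS'top : σ.app (RMod.of R (R ⧸ m)) = ⊤ := by
    have := σ.map_le (M := RMod.of R ↥C) (N := RMod.of R (R ⧸ m)) f
    rw [show σ.app (RMod.of R ↥C) = ⊤ from hCtop, Submodule.map_top,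
      LinearMap.range_eq_top.mpr hfsurj] at this
    exact top_le_iff.mp this
  -- paraprojectivity gives an embedding S' ↪ C
  obtain ⟨g, hg⟩ := h (RMod.of R (R ⧸ m)) hS' hS'top (RMod.of R ↥C) ⟨f, hfsurj⟩
  -- embed into M
  set e : (R ⧸ m) →ₗ[R] (M : Type u) := N.subtype.comp (C.subtype.comp g) with he
  have heinj : Function.Injective e :=
    N.injective_subtype.comp (C.injective_subtype.comp hg)
  refine ⟨LinearMap.range e, ?_, ?_, ?_⟩
  · rintro y ⟨z, rfl⟩
    exact ((C.subtype.comp g) z).2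
  · exact IsSimpleModule.congr (LinearEquiv.ofInjective e heinj).symm
  · have := σ.map_le (M := RMod.of R (R ⧸ m))
      (N := RMod.of R ↥(LinearMap.range e)) e.rangeRestrict
    rw [hS'top, Submodule.map_top,
      LinearMap.range_eq_top.mpr e.surjective_rangeRestrict] at this
    exact top_le_iff.mp this
end

section
/- Let σ be a left exact preradical on R-Mod. If R satisfies (σ-HH), then R is a left σ-max ring and a left σ-semiartinian ring. -/
/-! Basic framework: bundled left `R`-modules (in the same universe as `R`),
preradicals on `R`-Mod, and the notions from the paper
"On σ-classes of modules with applications". -/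

universe u

namespace Preradical

variable {R : Type u} [Ring R]

/-- The torsion class of any preradical is closed under arbitrary epimorphic images. -/
theorem ap_top_of_surj (σ : Preradical R) {A B : Type u} [AddCommGroup A] [Module R A]
    [AddCommGroup B] [Module R B] (f : A →ₗ[R] B) (hf : Function.Surjective f)
    (hA : σ.ap A = ⊤) : σ.ap B = ⊤ := by
  have h := σ.map_le (M := RMod.of R A) (N := RMod.of R B) f
  rw [show σ.app (RMod.of R A) = σ.ap A from rfl, hA, Submodule.map_top,
    LinearMap.range_eq_top.mpr hf] at h
  exact top_unique h

/-- For a left exact preradical, every submodule of `σ(B)` is σ-torsion. -/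
theorem ap_coe_top (σ : Preradical R) (hle : σ.LeftExact) (B : RMod R)
    (C : Submodule R (B : Type u)) (hC : C ≤ σ.app B) : σ.ap ↥C = ⊤ := by
  have h := hle B C
  have h2 : C ⊓ σ.app B = C := inf_eq_left.mpr hC
  have h3 : (σ.ap ↥C).map C.subtype = (⊤ : Submodule R ↥C).map C.subtype := by
    rw [h, h2, Submodule.map_top, Submodule.range_subtype]
  exact Submodule.map_injective_of_injective C.injective_subtype h3

/-- Key step: any submodule `N` with `σ(N) ≠ 0` contains a σ-torsion simple submodule. -/
theorem exists_simple_torsion_sub (σ : Preradical R) (hle : σ.LeftExact) (hHH : σ.HH)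
    (B : RMod R) (N : Submodule R (B : Type u)) (hN : σ.ap ↥N ≠ ⊥) :
    ∃ S : Submodule R (B : Type u), S ≤ N ∧ IsSimpleModule R ↥S ∧ σ.ap ↥S = ⊤ := by
  obtain ⟨x, hxmem, hx0⟩ := (Submodule.ne_bot_iff _).mp hN
  set C : Submodule R ↥N := Submodule.span R {x} with hCdef
  have hCle : C ≤ σ.ap ↥N := Submodule.span_le.mpr (by simpa using hxmem)
  have hCtop : σ.ap ↥C = ⊤ := σ.ap_coe_top hle (RMod.of R ↥N) C hCle
  have hxC : x ∈ C := Submodule.mem_span_singleton_self x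
  haveI hCnt : Nontrivial ↥C := ⟨⟨⟨x, hxC⟩, 0, by simp [Subtype.ext_iff, hx0]⟩⟩
  -- C is finitely generated, hence has a maximal submodule
  have hCfg : C.FG := ⟨{x}, by rw [hCdef, Finset.coe_singleton]⟩
  have hcomp : IsCompactElement (⊤ : Submodule R ↥C) :=
    (Submodule.fg_iff_compact _).mp ((Submodule.fg_top C).mpr hCfg)
  haveI := CompleteLattice.coatomic_of_top_compact hcomp
  have hbotne : (⊥ : Submodule R ↥C) ≠ ⊤ := by
    intro h
    have : (⟨x, hxC⟩ : ↥C) ∈ (⊥ : Submodule R ↥C) := h ▸ Submodule.mem_top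
    rw [Submodule.mem_bot] at this
    exact hx0 (congrArg Subtype.val this)
  obtain ⟨K, hK, -⟩ := (IsCoatomic.eq_top_or_exists_le_coatom (⊥ : Submodule R ↥C)).resolve_left
    hbotne
  haveI hS0 : IsSimpleModule R (↥C ⧸ K) := (isSimpleModule_iff_isCoatom (m := K)).mpr hK
  have hS0top : σ.ap (↥C ⧸ K) = ⊤ := σ.ap_top_of_surj K.mkQ (Submodule.mkQ_surjective K) hCtop
  -- Apply (σ-HH) with M := C and N := C/K
  set M₀ : RMod R := RMod.of R ↥C with hM₀def
  set N₀ : RMod R := RMod.of R (↥C ⧸ K) with hN₀def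
  haveI : Nontrivial (↥C ⧸ K) := IsSimpleModule.nontrivial R _
  have hM0 : σ.app M₀ ≠ ⊥ := by
    rw [show σ.app M₀ = σ.ap ↥C from rfl, hCtop]
    exact fun h => hbotne h.symm
  have hN0 : σ.app N₀ ≠ ⊥ := by
    rw [show σ.app N₀ = σ.ap (↥C ⧸ K) from rfl, hS0top]
    intro h
    obtain ⟨a, b, hab⟩ := ‹Nontrivial (↥C ⧸ K)›
    have ha : a ∈ (⊥ : Submodule R (↥C ⧸ K)) := h ▸ Submodule.mem_top
    have hb : b ∈ (⊥ : Submodule R (↥C ⧸ K)) := h ▸ Submodule.mem_top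
    rw [Submodule.mem_bot] at ha hb
    exact hab (ha.trans hb.symm)
  have e0 : ↥(σ.app N₀) ≃ₗ[R] (↥C ⧸ K) :=
    (LinearEquiv.ofEq _ _ hS0top).trans (Submodule.topEquiv)
  -- a nonzero map C → σ(C/K)
  have hright : ∃ f : (M₀ : Type u) →ₗ[R] ↥(σ.app N₀), f ≠ 0 := by
    refine ⟨e0.symm.toLinearMap ∘ₗ K.mkQ, ?_⟩
    intro h
    obtain ⟨z, hz⟩ := exists_ne (0 : ↥C ⧸ K)
    obtain ⟨y, hy⟩ := Submodule.mkQ_surjective K z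
    have : e0.symm z = 0 := by
      have := congrArg (fun φ => φ y) h
      simpa [hy] using this
    exact hz (e0.symm.map_eq_zero_iff.mp this)
  obtain ⟨g, hg⟩ := (hHH M₀ N₀ hM0 hN0).mpr hright
  -- turn it into an injective map C/K → C
  have hg' : ∃ a : ↥C ⧸ K, (g ∘ₗ e0.symm.toLinearMap) a ≠ 0 := by
    by_contra h
    push_neg at h
    apply hg
    ext a
    simpa using h (e0 a)
  obtain ⟨a₀, ha₀⟩ := hg'
  set g' : (↥C ⧸ K) →ₗ[R] ↥C := g ∘ₗ e0.symm.toLinearMap with hg'def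
  have hg'ne : g' ≠ 0 := fun h => ha₀ (by rw [h]; rfl)
  have hker : LinearMap.ker g' = ⊥ := by
    rcases eq_bot_or_eq_top (LinearMap.ker g') with h | h
    · exact h
    · exact absurd (LinearMap.ker_eq_top.mp h) hg'ne
  have hginj : Function.Injective g' := LinearMap.ker_eq_bot.mp hker
  -- embed C/K into B
  set ι : (↥C ⧸ K) →ₗ[R] (B : Type u) := N.subtype ∘ₗ C.subtype ∘ₗ g' with hιdef
  have hιinj : Function.Injective ι := by
    intro a b hab
    exact hginj (Submodule.injective_subtype C (Submodule.injective_subtype N hab))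
  refine ⟨LinearMap.range ι, ?_, ?_, ?_⟩
  · rintro y ⟨a, rfl⟩
    exact ((C.subtype ∘ₗ g') a).2
  · exact IsSimpleModule.congr (LinearEquiv.ofInjective ι hιinj).symm
  · exact σ.ap_top_of_surj (LinearEquiv.ofInjective ι hιinj).toLinearMap
      (LinearEquiv.ofInjective ι hιinj).surjective hS0top

end Preradical

/-- If `σ` is left exact and `R` satisfies `(σ-HH)`, then `R` is a left
σ-max ring and a left σ-semiartinian ring. -/
theorem sigmaMax_and_sigmaSemiartinian_of_hh {R : Type u} [Ring R] (σ : Preradical R)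
    (hle : σ.LeftExact) (hHH : σ.HH) :
    σ.SigmaMax ∧ σ.SigmaSemiartinian := by
  constructor
  · intro M L f hf hLnt hσL
    -- find a σ-torsion simple submodule S of L
    have hσσ : σ.ap ↥(σ.app L) = ⊤ := σ.ap_coe_top hle L (σ.app L) le_rfl
    haveI hNnt : Nontrivial ↥(σ.app L) := Submodule.nontrivial_iff_ne_bot.mpr hσL
    have hσσne : σ.ap ↥(σ.app L) ≠ ⊥ := by
      rw [hσσ]
      intro h
      obtain ⟨a, b, hab⟩ := hNnt
      have ha : a ∈ (⊥ : Submodule R ↥(σ.app L)) := h ▸ Submodule.mem_top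
      have hb : b ∈ (⊥ : Submodule R ↥(σ.app L)) := h ▸ Submodule.mem_top
      rw [Submodule.mem_bot] at ha hb
      exact hab (ha.trans hb.symm)
    obtain ⟨S, hSle, hSsimple, hStop⟩ :=
      σ.exists_simple_torsion_sub hle hHH L (σ.app L) hσσne
    haveI := hSsimple
    haveI : Nontrivial ↥S := IsSimpleModule.nontrivial R _
    -- apply (σ-HH) with M := L and N := S
    set N₀ : RMod R := RMod.of R ↥S with hN₀def
    have hN0 : σ.app N₀ ≠ ⊥ := by
      rw [show σ.app N₀ = σ.ap ↥S from rfl, hStop]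
      intro h
      obtain ⟨a, b, hab⟩ := ‹Nontrivial ↥S›
      have ha : a ∈ (⊥ : Submodule R ↥S) := h ▸ Submodule.mem_top
      have hb : b ∈ (⊥ : Submodule R ↥S) := h ▸ Submodule.mem_top
      rw [Submodule.mem_bot] at ha hb
      exact hab (ha.trans hb.symm)
    have e0 : ↥(σ.app N₀) ≃ₗ[R] ↥S := (LinearEquiv.ofEq _ _ hStop).trans (Submodule.topEquiv)
    have hleft : ∃ f : ↥(σ.app N₀) →ₗ[R] (L : Type u), f ≠ 0 := by
      refine ⟨S.subtype ∘ₗ e0.toLinearMap, ?_⟩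
      intro h
      obtain ⟨s, hs⟩ := exists_ne (0 : ↥S)
      have := congrArg (fun φ => φ (e0.symm s)) h
      simp only [LinearMap.comp_apply, LinearMap.zero_apply, LinearEquiv.coe_coe,
        LinearEquiv.apply_symm_apply] at this
      exact hs (ZeroMemClass.coe_eq_zero.mp this)
    obtain ⟨g, hg⟩ := (hHH L N₀ hσL hN0).mp hleft
    set g' : (L : Type u) →ₗ[R] ↥S := e0.toLinearMap ∘ₗ g with hg'def
    have hga : ∃ a, g a ≠ 0 := by
      by_contra h
      push_neg at h
      exact hg (LinearMap.ext fun a => h a)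
    obtain ⟨a, ha⟩ := hga
    have hg'ne : g' ≠ 0 := by
      intro h
      apply ha
      have h1 : g' a = 0 := by rw [h]; rfl
      have h2 : e0 (g a) = 0 := h1
      exact e0.map_eq_zero_iff.mp h2
    have hrange : LinearMap.range g' = ⊤ := by
      rcases eq_bot_or_eq_top (LinearMap.range g') with h | h
      · exact absurd (LinearMap.range_eq_bot.mp h) hg'ne
      · exact h
    have hsurj : Function.Surjective g' := LinearMap.range_eq_top.mp hrange
    refine ⟨LinearMap.ker g', ?_, ?_⟩
    · exact IsSimpleModule.congr (g'.quotKerEquivOfSurjective hsurj)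
    · exact σ.ap_top_of_surj (g'.quotKerEquivOfSurjective hsurj).symm.toLinearMap
        (g'.quotKerEquivOfSurjective hsurj).symm.surjective hStop
  · intro M N _ hσN
    exact σ.exists_simple_torsion_sub hle hHH M N hσN
end

section
/- Let σ be an exact and costable preradical on R-Mod and let C be a class of R-modules closed under isomorphism. Then C satisfies (σ-CN) if and only if C is σ-cohereditary and C = (C^{⊥/σ})^{⊥/σ}, where for a σ-cohereditary class D one defines D^{⊥/σ} = {M : every quotient L of M with σ(L) ≠ 0 satisfies σ(L) ∉ D} ∪ F_σ. -/
/-! Basic framework: bundled left `R`-modules (in the same universe as `R`),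
preradicals on `R`-Mod, and the notions from the paper
"On σ-classes of modules with applications". -/

universe u

namespace Preradical

variable {R : Type u} [Ring R]

private def mulRightLin (r : R) : R →ₗ[R] R where
  toFun x := x * r
  map_add' a b := add_mul a b r
  map_smul' s x := by simp only [smul_eq_mul, mul_assoc, RingHom.id_apply]

/-- For exact costable σ there is a central idempotent `e` with `σ(M) = eM` pointwise. -/
lemma exists_splitting (σ : Preradical R) (hle : σ.LeftExact) (hco : σ.Cohereditary)
    (hcost : σ.Costable) :
    ∃ e : R, (∀ r : R, e * r = r * e) ∧ e * e = e ∧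
      ∀ (M : Type u) [AddCommGroup M] [Module R M] (x : M), x ∈ σ.ap M ↔ e • x = x := by
  -- σ(R) is a two-sided ideal
  have htwo : ∀ a ∈ σ.ap R, ∀ r : R, a * r ∈ σ.ap R := by
    intro a ha r
    exact σ.map_le (M := RMod.of R R) (N := RMod.of R R) (mulRightLin r) ⟨a, ha, rfl⟩
  -- σ(R) is a direct summand
  obtain ⟨K, hK⟩ := hcost (RMod.of R R) inferInstance
  have h1 : (1 : R) ∈ σ.ap R ⊔ K := by rw [hK.sup_eq_top]; trivial
  obtain ⟨e, he, k, hk, hek⟩ := Submodule.mem_sup.mp h1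
  have hIK : ∀ x ∈ σ.ap R, x ∈ K → x = 0 := by
    intro x hx hxK
    have : x ∈ σ.ap R ⊓ K := ⟨hx, hxK⟩
    rwa [hK.inf_eq_bot, Submodule.mem_bot] at this
  have key1 : ∀ a ∈ σ.ap R, a * e = a := by
    intro a ha
    have hk0 : a * k = 0 := by
      apply hIK
      · have h : a * e + a * k = a := by rw [← mul_add, hek, mul_one]
        have h2 : a * k = a - a * e := eq_sub_of_add_eq' h
        rw [h2]
        exact sub_mem ha ((σ.ap R).smul_mem a he)
      · exact K.smul_mem a hk
    have : a * (e + k) = a * 1 := by rw [hek]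
    rw [mul_add, mul_one, hk0, add_zero] at this
    exact this
  have hidem : e * e = e := key1 e he
  -- every σ-torsion element x satisfies x = a • x for some a ∈ σ(R)
  have C1 : ∀ (M : Type u) [AddCommGroup M] [Module R M], ∀ x : M, x ∈ σ.ap M →
      ∃ a ∈ σ.ap R, a • x = x := by
    intro M _ _ x hx
    set A := LinearMap.range (LinearMap.toSpanSingleton R M x) with hA
    have hxA : x ∈ A := ⟨1, one_smul R x⟩
    have hle' := hle (RMod.of R M) A
    have hx' : x ∈ (σ.ap ↥A).map A.subtype := by
      rw [hle']; exact ⟨hxA, hx⟩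
    obtain ⟨y, hy, hyx⟩ := hx'
    have hf : Function.Surjective (LinearMap.toSpanSingleton R M x).rangeRestrict :=
      LinearMap.surjective_rangeRestrict _
    have hcoh := hco (RMod.of R R) (RMod.of R ↥A)
      (LinearMap.toSpanSingleton R M x).rangeRestrict hf
    have hy2 : y ∈ Submodule.map (LinearMap.toSpanSingleton R M x).rangeRestrict
        (σ.app (RMod.of R R)) := by rw [hcoh]; exact hy
    obtain ⟨a, ha, hay⟩ := hy2
    refine ⟨a, ha, ?_⟩
    have : (((LinearMap.toSpanSingleton R M x).rangeRestrict a : ↥A) : M) = a • x := rfl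
    rw [hay] at this
    rw [← this]; exact hyx
  -- e • x ∈ σ(M) always
  have hemem : ∀ (M : Type u) [AddCommGroup M] [Module R M], ∀ x : M, e • x ∈ σ.ap M := by
    intro M _ _ x
    exact σ.map_le (M := RMod.of R R) (N := RMod.of R M)
      (LinearMap.toSpanSingleton R M x) ⟨e, he, rfl⟩
  have C2 : ∀ (M : Type u) [AddCommGroup M] [Module R M], ∀ x : M, x ∈ σ.ap M →
      e • x = x := by
    intro M _ _ x hx
    have hz_mem : x - e • x ∈ σ.ap M := sub_mem hx (hemem M x)
    have hez : e • (x - e • x) = 0 := by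
      rw [smul_sub, smul_smul, hidem, sub_self]
    obtain ⟨a, ha, haz⟩ := C1 M (x - e • x) hz_mem
    have hz0 : x - e • x = 0 := by
      have hae : a * e = a := key1 a ha
      calc x - e • x = a • (x - e • x) := haz.symm
        _ = (a * e) • (x - e • x) := by rw [hae]
        _ = a • (e • (x - e • x)) := by rw [mul_smul]
        _ = 0 := by rw [hez, smul_zero]
    have := sub_eq_zero.mp hz0
    exact this.symm
  -- centrality
  have hcen : ∀ r : R, e * r = r * e := by
    intro r
    have h1 : (e * r) * e = e * r := key1 (e * r) (htwo e he r)
    have h2 : e * (r * e) = r * e := by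
      have : (r * e) ∈ σ.ap R := (σ.ap R).smul_mem r he
      have := C2 R (r * e) this
      simpa [smul_eq_mul] using this
    rw [← h1, mul_assoc, h2]
  refine ⟨e, hcen, hidem, ?_⟩
  intro M _ _ x
  constructor
  · exact C2 M x
  · intro h; rw [← h]; exact hemem M x

/-- The projection onto `σ(M)` given the splitting element. -/
lemma exists_proj (σ : Preradical R) (e : R) (hcen : ∀ r : R, e * r = r * e)
    (hidem : e * e = e)
    (hmem : ∀ (M : Type u) [AddCommGroup M] [Module R M] (x : M), x ∈ σ.ap M ↔ e • x = x)
    (M : Type u) [AddCommGroup M] [Module R M] :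
    ∃ p : M →ₗ[R] ↥(σ.ap M), Function.Surjective p := by
  refine ⟨⟨⟨fun m => ⟨e • m, (hmem M (e • m)).mpr (by rw [smul_smul, hidem])⟩, ?_⟩, ?_⟩, ?_⟩
  · intro a b; apply Subtype.ext; simp [smul_add]
  · intro r m; apply Subtype.ext
    show e • (r • m) = r • (e • m)
    rw [smul_smul, smul_smul, hcen r]
  · rintro ⟨x, hx⟩
    exact ⟨x, Subtype.ext ((hmem M x).mp hx)⟩

/-- Restriction of a surjection to σ-parts is surjective. -/
lemma exists_restrict (σ : Preradical R) (e : R) (hidem : e * e = e)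
    (hmem : ∀ (M : Type u) [AddCommGroup M] [Module R M] (x : M), x ∈ σ.ap M ↔ e • x = x)
    {M N : Type u} [AddCommGroup M] [Module R M] [AddCommGroup N] [Module R N]
    (f : M →ₗ[R] N) (hf : Function.Surjective f) :
    ∃ g : ↥(σ.ap M) →ₗ[R] ↥(σ.ap N), Function.Surjective g := by
  have hmap : ∀ x ∈ σ.ap M, f x ∈ σ.ap N :=
    fun x hx => σ.map_le (M := RMod.of R M) (N := RMod.of R N) f ⟨x, hx, rfl⟩
  refine ⟨f.restrict hmap, ?_⟩
  rintro ⟨y, hy⟩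
  obtain ⟨x, hx⟩ := hf y
  refine ⟨⟨e • x, (hmem M (e • x)).mpr ?_⟩, Subtype.ext ?_⟩
  · rw [smul_smul, hidem]
  · show f (e • x) = y
    rw [map_smul, hx]
    exact (hmem N y).mp hy

end Preradical

/-- For `σ` exact and costable and `C` a class of modules closed under
isomorphism: `C` satisfies `(σ-CN)` iff `C` is σ-cohereditary and
`C = (C^{⊥/σ})^{⊥/σ}`. -/
theorem sigmaCN_iff_cohereditary_and_double_perp {R : Type u} [Ring R]
    (σ : Preradical R) (hle : σ.LeftExact) (hco : σ.Cohereditary) (hcost : σ.Costable)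
    (C : RMod R → Prop) (hC : RespectsIso R C) :
    σ.SigmaCN C ↔
      (σ.SigmaCohereditaryClass C ∧ ∀ M : RMod R, C M ↔ σ.Perp (σ.Perp C) M) := by
  obtain ⟨e, hcen, hidem, hmem⟩ := σ.exists_splitting hle hco hcost
  -- σ(σ(L)) = ⊤ for every L
  have htop : ∀ L : RMod R, σ.app (RMod.of R ↥(σ.app L)) = ⊤ := by
    intro L
    rw [eq_top_iff]
    rintro ⟨y, hy⟩ -
    refine (hmem _ _).mpr (Subtype.ext ?_)
    show e • y = y
    exact (hmem _ y).mp hy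
  have hnebot : ∀ L : RMod R, σ.app L ≠ ⊥ → σ.app (RMod.of R ↥(σ.app L)) ≠ ⊥ := by
    intro L hL
    rw [htop L]
    intro h
    obtain ⟨x, hx, hx0⟩ := (Submodule.ne_bot_iff _).mp hL
    have hmem' : (⟨x, hx⟩ : ↥(σ.app L)) ∈ (⊥ : Submodule R ↥(σ.app L)) := by
      rw [← h]; trivial
    rw [Submodule.mem_bot] at hmem'
    exact hx0 (congrArg Subtype.val hmem')
  have hquot_bot : ∀ (M L : RMod R) (f : (M : Type u) →ₗ[R] (L : Type u)),
      Function.Surjective f → σ.app M = ⊥ → σ.app L = ⊥ := by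
    intro M L f hf hM
    rw [eq_bot_iff]
    intro x hx
    obtain ⟨m, rfl⟩ := hf x
    have hm : e • m ∈ σ.app M := (hmem _ _).mpr (by rw [smul_smul, hidem])
    rw [hM, Submodule.mem_bot] at hm
    have hex : e • f m = f m := (hmem _ _).mp hx
    rw [Submodule.mem_bot, ← hex, ← map_smul, hm, map_zero]
  constructor
  · -- forward direction
    intro hCN
    have hcoh1 : ∀ M : RMod R, σ.app M = ⊥ → C M := by
      intro M hM
      apply hCN
      intro L f hf hL
      exact absurd (hquot_bot M L f hf hM) hL
    have hcoh2 : ∀ (M L : RMod R) (f : (M : Type u) →ₗ[R] (L : Type u)),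
        Function.Surjective f → C M → C (RMod.of R ↥(σ.app L)) := by
      intro M L f hf hM
      apply hCN
      intro K q hq hK
      obtain ⟨p, hp⟩ := σ.exists_proj e hcen hidem hmem (L : Type u)
      exact ⟨M, K, hM, hK, ⟨LinearMap.id, Function.surjective_id⟩,
        ⟨q ∘ₗ (p ∘ₗ f), hq.comp (hp.comp hf)⟩⟩
    refine ⟨⟨hcoh1, hcoh2⟩, ?_⟩
    intro M
    constructor
    · intro hMC
      by_cases hM : σ.app M = ⊥
      · exact Or.inr hM
      refine Or.inl ?_
      intro L f hf hL hP
      rcases hP with hP | hP0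
      · have h1 := hP (RMod.of R ↥(σ.app L)) LinearMap.id Function.surjective_id
          (hnebot L hL)
        apply h1
        have hCL : C (RMod.of R ↥(σ.app L)) := hcoh2 M L f hf hMC
        have hiso : Nonempty
            ((↥(σ.app L) : Type u) ≃ₗ[R] ↥(σ.app (RMod.of R ↥(σ.app L)))) := by
          rw [htop L]; exact ⟨Submodule.topEquiv.symm⟩
        exact hC _ _ hiso hCL
      · exact absurd hP0 (hnebot L hL)
    · intro hM
      apply hCN
      intro L f hf hL
      rcases hM with hM | hM0
      · have hnP : ¬ σ.Perp C (RMod.of R ↥(σ.app L)) := hM L f hf hL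
        simp only [Preradical.Perp, not_or] at hnP
        obtain ⟨hnP1, -⟩ := hnP
        push_neg at hnP1
        obtain ⟨L', q, hq, hL', hCL'⟩ := hnP1
        obtain ⟨p1, hp1⟩ := σ.exists_proj e hcen hidem hmem (L : Type u)
        obtain ⟨p2, hp2⟩ := σ.exists_proj e hcen hidem hmem (L' : Type u)
        exact ⟨RMod.of R ↥(σ.app L'), RMod.of R ↥(σ.app L'), hCL', hnebot L' hL',
          ⟨p2 ∘ₗ (q ∘ₗ p1), hp2.comp (hq.comp hp1)⟩,
          ⟨LinearMap.id, Function.surjective_id⟩⟩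
      · exact absurd (hquot_bot M L f hf hM0) hL
  · -- backward direction
    rintro ⟨⟨hcoh1, hcoh2⟩, hdp⟩
    intro M hH
    rw [hdp M]
    by_cases hM : σ.app M = ⊥
    · exact Or.inr hM
    refine Or.inl ?_
    intro L f hf hL hP
    obtain ⟨C₀, N, hC₀, hN, ⟨g, hg⟩, ⟨h, hh⟩⟩ := hH L f hf hL
    rcases hP with hP | hP0
    · obtain ⟨g', hg'⟩ := σ.exists_restrict e hidem hmem g hg
      have h1 := hP (RMod.of R ↥(σ.app N)) g' hg' (hnebot N hN)
      apply h1
      have hCN' : C (RMod.of R ↥(σ.app N)) := hcoh2 C₀ N h hh hC₀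
      have hiso : Nonempty
          ((↥(σ.app N) : Type u) ≃ₗ[R] ↥(σ.app (RMod.of R ↥(σ.app N)))) := by
        rw [htop N]; exact ⟨Submodule.topEquiv.symm⟩
      exact hC _ _ hiso hCN'
    · exact absurd hP0 (hnebot L hL)
end

section
/- Let σ be an exact and costable preradical on R-Mod. The following are equivalent: (1) R is a left σ-max ring; (2) every class C of R-modules satisfying (σ-CN) is generated by a family of σ-torsion simple modules, i.e. there is a family S of σ-torsion simple modules contained in C such that C is the smallest class satisfying (σ-CN) that contains S. -/
/-! Basic framework: bundled left `R`-modules (in the same universe as `R`),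
preradicals on `R`-Mod, and the notions from the paper
"On σ-classes of modules with applications". -/

universe u

section Aux
variable {R : Type u} [Ring R] (σ : Preradical R)

/-- Transfer `σ = ⊤` along a surjection. -/
lemma sigma_top_of_surj {A B : Type u} [AddCommGroup A] [Module R A]
    [AddCommGroup B] [Module R B] (f : A →ₗ[R] B) (hf : Function.Surjective f)
    (h : σ.ap A = ⊤) : σ.ap B = ⊤ := by
  have := σ.map_le (M := RMod.of R A) (N := RMod.of R B) f
  rw [show σ.app (RMod.of R A) = ⊤ from h, Submodule.map_top,
    LinearMap.range_eq_top.mpr hf] at this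
  exact top_le_iff.mp this

/-- If a module surjects onto a σ-torsion simple module, it has a σ-torsion
simple quotient. -/
lemma simple_quot_of_surj {X Y : Type u} [AddCommGroup X] [Module R X]
    [AddCommGroup Y] [Module R Y] (ψ : X →ₗ[R] Y) (hψ : Function.Surjective ψ)
    (h1 : IsSimpleModule R Y) (h2 : σ.ap Y = ⊤) :
    ∃ K : Submodule R X, IsSimpleModule R (X ⧸ K) ∧ σ.ap (X ⧸ K) = ⊤ := by
  refine ⟨LinearMap.ker ψ, ?_, ?_⟩
  · have := h1; exact IsSimpleModule.congr (ψ.quotKerEquivOfSurjective hψ)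
  · exact sigma_top_of_surj σ (ψ.quotKerEquivOfSurjective hψ).symm.toLinearMap
      (ψ.quotKerEquivOfSurjective hψ).symm.surjective h2

/-- A class satisfying `(σ-CN)` is closed under quotients. -/
lemma sigmaCN_closed_quot {C : RMod R → Prop} (hC : σ.SigmaCN C)
    {M L : RMod R} (f : (M : Type u) →ₗ[R] (L : Type u)) (hf : Function.Surjective f)
    (hM : C M) : C L := by
  refine hC L fun L' g hg hσ => ⟨M, L', hM, hσ, ⟨LinearMap.id, fun x => ⟨x, rfl⟩⟩,
    ⟨g.comp f, hg.comp hf⟩⟩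

end Aux

/-- For `σ` exact and costable, TFAE: (1) `R` is a left σ-max ring;
(2) every class satisfying `(σ-CN)` is generated by a family of σ-torsion simple
modules. -/
theorem sigmaMax_iff_conat_generated_by_simples {R : Type u} [Ring R]
    (σ : Preradical R) (hle : σ.LeftExact) (hco : σ.Cohereditary) (hcost : σ.Costable) :
    σ.SigmaMax ↔
      ∀ C : RMod R → Prop, RespectsIso R C → σ.SigmaCN C →
        ∃ S : RMod R → Prop,
          (∀ M : RMod R, S M → C M ∧ IsSimpleModule R (M : Type u) ∧ σ.app M = ⊤) ∧
          ∀ D : RMod R → Prop, RespectsIso R D → σ.SigmaCN D →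
            (∀ M : RMod R, S M → D M) → ∀ M : RMod R, C M → D M := by
  constructor
  · -- (1) → (2)
    intro hmax C hCiso hCCN
    refine ⟨fun M => C M ∧ IsSimpleModule R (M : Type u) ∧ σ.app M = ⊤,
      fun M hM => hM, ?_⟩
    intro D hDiso hDCN hSD M hCM
    refine hDCN M fun L f hf hσL => ?_
    have hnt : Nontrivial (L : Type u) := by
      rcases Submodule.exists_mem_ne_zero_of_ne_bot hσL with ⟨x, -, hx⟩
      exact ⟨x, 0, hx⟩
    obtain ⟨K, hKsimp, hKtop⟩ := hmax M L f hf hnt hσL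
    set N : RMod R := RMod.of R ((L : Type u) ⧸ K) with hN
    have hCN : C N := sigmaCN_closed_quot σ hCCN (K.mkQ.comp f)
      ((K.mkQ_surjective).comp hf) hCM
    have hDN : D N := hSD N ⟨hCN, hKsimp, hKtop⟩
    have : Nontrivial (N : Type u) := hKsimp.nontrivial
    refine ⟨N, N, hDN, ?_, ⟨K.mkQ, K.mkQ_surjective⟩, ⟨LinearMap.id, fun x => ⟨x, rfl⟩⟩⟩
    rw [show σ.app N = ⊤ from hKtop]
    exact top_ne_bot
  · -- (2) → (1)
    intro h M L f hf _ hσL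
    obtain ⟨S, hS, hmin⟩ := h (fun _ => True) (fun _ _ _ _ => trivial)
      (fun _ _ => trivial)
    set D : RMod R → Prop := fun M' =>
      ∀ (L' : RMod R) (g : (M' : Type u) →ₗ[R] (L' : Type u)), Function.Surjective g →
        σ.app L' ≠ ⊥ →
        ∃ K : Submodule R (L' : Type u),
          IsSimpleModule R ((L' : Type u) ⧸ K) ∧ σ.ap ((L' : Type u) ⧸ K) = ⊤ with hD
    have hDiso : RespectsIso R D := by
      intro M' N' ⟨e⟩ hM' L' g hg hσ
      exact hM' L' (g.comp e.toLinearMap) (hg.comp e.surjective) hσ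
    have hDCN : σ.SigmaCN D := by
      intro M' hM' L' g hg hσ
      obtain ⟨C₀, N, hC₀, hσN, ⟨p, hp⟩, ⟨q, hq⟩⟩ := hM' L' g hg hσ
      obtain ⟨K, hKsimp, hKtop⟩ := hC₀ N q hq hσN
      exact simple_quot_of_surj σ ((K.mkQ).comp p) ((K.mkQ_surjective).comp hp)
        hKsimp hKtop
    have hSD : ∀ M', S M' → D M' := by
      intro M' hM' L' g hg hσ
      obtain ⟨-, hsimp, htop⟩ := hS M' hM'
      have hker : LinearMap.ker g = ⊥ ∨ LinearMap.ker g = ⊤ :=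
        hsimp.1.eq_bot_or_eq_top (LinearMap.ker g)
      rcases hker with hker | hker
      · have hinj : Function.Injective g := LinearMap.ker_eq_bot.mp hker
        exact simple_quot_of_surj σ
          (LinearEquiv.ofBijective g ⟨hinj, hg⟩).symm.toLinearMap
          (LinearEquiv.ofBijective g ⟨hinj, hg⟩).symm.surjective hsimp htop
      · exfalso
        apply hσ
        have hg0 : g = 0 := LinearMap.ker_eq_top.mp hker
        have : Subsingleton (L' : Type u) := by
          constructor
          intro a b
          obtain ⟨x, rfl⟩ := hg a; obtain ⟨y, rfl⟩ := hg b
          rw [hg0]; rfl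
        exact Subsingleton.elim _ _
    exact hmin D hDiso hDCN hSD M trivial L f hf hσL
end

section
/- Let σ be an exact and costable preradical on R-Mod. The following are equivalent: (1) every σ-torsion simple module is parainjective; (2) every class of R-modules satisfying (σ-CN) is a hereditary σ-torsion class; (3) every class of R-modules satisfying (σ-CN) is σ-hereditary. -/
/-! Basic framework: bundled left `R`-modules (in the same universe as `R`),
preradicals on `R`-Mod, and the notions from the paper
"On σ-classes of modules with applications". -/

universe u

section AuxB
variable {R : Type u} [Ring R]

/-- If a quotient of a submodule of `X` is parainjective, it is a quotient of `X`. -/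
lemma parainj_surj_of_submodule_surj {X T : Type u} [AddCommGroup X] [Module R X]
    [AddCommGroup T] [Module R T] (hT : Parainjective R T)
    (Y : Submodule R X) (p : ↥Y →ₗ[R] T) (hp : Function.Surjective p) :
    ∃ q : X →ₗ[R] T, Function.Surjective q := by
  set W : Submodule R X := (LinearMap.ker p).map Y.subtype with hW
  set ψ : ↥Y →ₗ[R] X ⧸ W := W.mkQ.comp Y.subtype with hψ
  have hker : LinearMap.ker ψ = LinearMap.ker p := by
    ext y
    simp only [hψ, LinearMap.mem_ker, LinearMap.comp_apply, Submodule.subtype_apply,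
      Submodule.mkQ_apply, Submodule.Quotient.mk_eq_zero, hW, Submodule.mem_map]
    constructor
    · rintro ⟨z, hz, hzy⟩
      have : z = y := Subtype.ext hzy
      rwa [this] at hz
    · intro h; exact ⟨y, h, rfl⟩
  have e := LinearMap.quotKerEquivOfSurjective p hp
  have hle : LinearMap.ker p ≤ LinearMap.ker ψ := hker.ge
  set ψbar : (↥Y ⧸ LinearMap.ker p) →ₗ[R] X ⧸ W := (LinearMap.ker p).liftQ ψ hle with hψbar
  have hψbarinj : Function.Injective ψbar := by
    rw [← LinearMap.ker_eq_bot]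
    exact Submodule.ker_liftQ_eq_bot _ _ _ hker.le
  have hι : Function.Injective (ψbar.comp (e.symm : T →ₗ[R] (↥Y ⧸ LinearMap.ker p))) :=
    hψbarinj.comp e.symm.injective
  obtain ⟨g, hg⟩ := hT (RMod.of R (X ⧸ W)) ⟨_, hι⟩
  exact ⟨g.comp W.mkQ, hg.comp W.mkQ_surjective⟩

/-- Every module with nonzero `σ`-torsion has a `σ`-torsion simple quotient of a
cyclic submodule; with (1) it is itself a quotient. -/
lemma exists_torsion_simple_quot (σ : Preradical R) (hlex : σ.LeftExact) (hco : σ.Cohereditary)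
    (h1 : ∀ S : RMod R, IsSimpleModule R (S : Type u) → σ.app S = ⊤ →
      Parainjective R (S : Type u))
    (X : Type u) [AddCommGroup X] [Module R X] (hX : σ.ap X ≠ ⊥) :
    ∃ T : RMod R, IsSimpleModule R (T : Type u) ∧ σ.app T = ⊤ ∧
      ∃ q : X →ₗ[R] (T : Type u), Function.Surjective q := by
  obtain ⟨x, hxσ, hx0⟩ := Submodule.ne_bot_iff _ |>.mp hX
  set Y : Submodule R X := Submodule.span R {x} with hY
  have hYle : Y ≤ σ.ap X := Submodule.span_le.mpr (by simpa using hxσ)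
  -- σ(Y) = ⊤
  have hσY : σ.ap ↥Y = ⊤ := by
    have h := hlex (RMod.of R X) Y
    have h2 : Y ⊓ σ.app (RMod.of R X) = Y := inf_eq_left.mpr hYle
    rw [h2] at h
    have h3 : (⊤ : Submodule R ↥Y).map Y.subtype = Y := Submodule.map_subtype_top Y
    exact Submodule.map_injective_of_injective Y.injective_subtype (h.trans h3.symm)
  -- Y is nontrivial
  have hxY : x ∈ Y := Submodule.mem_span_singleton_self x
  have hnt : Nontrivial ↥Y := ⟨⟨x, hxY⟩, 0, by simp [Subtype.ext_iff, hx0]⟩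
  -- Y has a maximal submodule
  have hfg : (⊤ : Submodule R ↥Y).FG := by
    rw [Submodule.fg_top]
    exact Submodule.fg_span_singleton x
  have hcoatomic : IsCoatomic (Submodule R ↥Y) :=
    CompleteLattice.coatomic_of_top_compact ((Submodule.fg_iff_compact _).mp hfg)
  obtain hbt | ⟨W, hWco, -⟩ := hcoatomic.eq_top_or_exists_le_coatom (⊥ : Submodule R ↥Y)
  · exfalso
    obtain ⟨a, b, hab⟩ := hnt
    have ha : a ∈ (⊥ : Submodule R ↥Y) := hbt ▸ Submodule.mem_top
    have hb : b ∈ (⊥ : Submodule R ↥Y) := hbt ▸ Submodule.mem_top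
    rw [Submodule.mem_bot] at ha hb
    exact hab (ha.trans hb.symm)
  · set T : RMod R := RMod.of R (↥Y ⧸ W) with hT
    have hsimp : IsSimpleModule R (T : Type u) := isSimpleModule_iff_isCoatom.mpr hWco
    have hσT : σ.app T = ⊤ := by
      have h := hco (RMod.of R ↥Y) T W.mkQ W.mkQ_surjective
      rw [← h]
      show (σ.ap ↥Y).map W.mkQ = ⊤
      rw [hσY, Submodule.map_top, Submodule.range_mkQ]
    obtain ⟨q, hq⟩ := parainj_surj_of_submodule_surj (h1 T hsimp hσT) Y W.mkQ W.mkQ_surjective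
    exact ⟨T, hsimp, hσT, q, hq⟩

end AuxB
section AuxC
variable {R : Type u} [Ring R]

lemma torsion_simple_app_ne_bot (σ : Preradical R) (T : RMod R)
    (hsimp : IsSimpleModule R (T : Type u)) (hσT : σ.app T = ⊤) : σ.app T ≠ ⊥ := by
  rw [hσT]
  intro h
  obtain ⟨a, b, hab⟩ := hsimp.nontrivial
  have ha : a ∈ (⊤ : Submodule R (T : Type u)) := Submodule.mem_top
  have hb : b ∈ (⊤ : Submodule R (T : Type u)) := Submodule.mem_top
  rw [h, Submodule.mem_bot] at ha hb
  exact hab (ha.trans hb.symm)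

/-- Key membership lemma for `(σ-CN)` classes. -/
lemma key_mem (σ : Preradical R) (hlex : σ.LeftExact) (hco : σ.Cohereditary)
    (h1 : ∀ S : RMod R, IsSimpleModule R (S : Type u) → σ.app S = ⊤ →
      Parainjective R (S : Type u))
    (C : RMod R → Prop) (hcn : σ.SigmaCN C) (M : RMod R) (hM : C M)
    (Z : Type u) [AddCommGroup Z] [Module R Z]
    (htrans : ∀ T : RMod R, IsSimpleModule R (T : Type u) → σ.app T = ⊤ →
      (∃ q : Z →ₗ[R] (T : Type u), Function.Surjective q) →
      ∃ q : (M : Type u) →ₗ[R] (T : Type u), Function.Surjective q) :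
    C (RMod.of R Z) := by
  apply hcn
  intro L' g hg hL'
  obtain ⟨T, hsimp, hσT, q, hq⟩ :=
    exists_torsion_simple_quot σ hlex hco h1 (L' : Type u) hL'
  obtain ⟨qM, hqM⟩ := htrans T hsimp hσT ⟨q.comp g, hq.comp hg⟩
  exact ⟨M, T, hM, torsion_simple_app_ne_bot σ T hsimp hσT, ⟨q, hq⟩, ⟨qM, hqM⟩⟩

end AuxC

/-- For `σ` exact and costable, TFAE: (1) every σ-torsion simple module
is parainjective; (2) every class satisfying `(σ-CN)` is a hereditary σ-torsion class;
(3) every class satisfying `(σ-CN)` is σ-hereditary. -/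
theorem parainjective_iff_conat_subset_tors {R : Type u} [Ring R] (σ : Preradical R)
    (hle : σ.LeftExact) (hco : σ.Cohereditary) (hcost : σ.Costable) :
    ((∀ S : RMod R, IsSimpleModule R (S : Type u) → σ.app S = ⊤ →
        Parainjective R (S : Type u)) ↔
      ∀ C : RMod R → Prop, RespectsIso R C → σ.SigmaCN C →
        σ.HereditarySigmaTorsionClass C) ∧
    ((∀ C : RMod R → Prop, RespectsIso R C → σ.SigmaCN C →
        σ.HereditarySigmaTorsionClass C) ↔
      ∀ C : RMod R → Prop, RespectsIso R C → σ.SigmaCN C →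
        σ.SigmaHereditaryClass C) := by
  -- (3) → (1)
  have h31 : (∀ C : RMod R → Prop, RespectsIso R C → σ.SigmaCN C →
      σ.SigmaHereditaryClass C) →
      ∀ S : RMod R, IsSimpleModule R (S : Type u) → σ.app S = ⊤ →
        Parainjective R (S : Type u) := by
    intro h3 S hS hσS
    intro NN hex
    obtain ⟨f, hf⟩ := hex
    by_contra hcon
    set C : RMod R → Prop :=
      fun M => ¬ ∃ g : (M : Type u) →ₗ[R] (S : Type u), Function.Surjective g with hC
    have hiso : RespectsIso R C := by
      intro M M' he hM hgM'
      obtain ⟨e⟩ := he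
      obtain ⟨g, hg⟩ := hgM'
      exact hM ⟨g.comp (e : (M : Type u) →ₗ[R] (M' : Type u)), hg.comp e.surjective⟩
    have hcnC : σ.SigmaCN C := by
      intro M hP hgM
      obtain ⟨g, hg⟩ := hgM
      have hσSne : σ.app S ≠ ⊥ := torsion_simple_app_ne_bot σ S hS hσS
      obtain ⟨C₀, N', hC₀, hN', ⟨g', hg'⟩, ⟨h', hh'⟩⟩ := hP S g hg hσSne
      rcases eq_bot_or_eq_top (LinearMap.ker g') with hker | hker
      · -- g' injective, so N' ≅ S and C₀ surjects onto S: contradiction with C₀ ∈ C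
        have hbij : Function.Bijective g' := ⟨LinearMap.ker_eq_bot.mp hker, hg'⟩
        let e' := LinearEquiv.ofBijective g' hbij
        exact hC₀ ⟨(e'.symm : (N' : Type u) →ₗ[R] (S : Type u)).comp h',
          e'.symm.surjective.comp hh'⟩
      · -- g' = 0, contradicting σ(N') ≠ ⊥
        have hg'0 : g' = 0 := LinearMap.ker_eq_top.mp hker
        have : LinearMap.range g' = ⊤ := LinearMap.range_eq_top.mpr hg'
        rw [hg'0, LinearMap.range_zero] at this
        exact hN' (le_bot_iff.mp (this ▸ le_top (a := σ.app N')))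
    have hher := h3 C hiso hcnC
    have hCN : C NN := hcon
    have hmem := hher.2 NN (LinearMap.range f) hCN
    -- build a surjection ↥(σ(range f)) ↠ S
    have hrle : LinearMap.range f ≤ σ.app NN := by
      have h := σ.map_le (M := S) (N := NN) f
      rwa [hσS, Submodule.map_top] at h
    have hσr : σ.ap ↥(LinearMap.range f) = ⊤ := by
      have h := hle NN (LinearMap.range f)
      have h2 : LinearMap.range f ⊓ σ.app NN = LinearMap.range f := inf_eq_left.mpr hrle
      rw [h2] at h
      have h3 : (⊤ : Submodule R ↥(LinearMap.range f)).map (LinearMap.range f).subtype =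
          LinearMap.range f := Submodule.map_subtype_top _
      exact Submodule.map_injective_of_injective
        (LinearMap.range f).injective_subtype (h.trans h3.symm)
    have hsurj1 : Function.Surjective ((σ.ap ↥(LinearMap.range f)).subtype) := by
      intro y
      exact ⟨⟨y, hσr ▸ Submodule.mem_top⟩, rfl⟩
    let e2 := LinearEquiv.ofInjective f hf
    refine hmem ⟨(e2.symm : ↥(LinearMap.range f) →ₗ[R] (S : Type u)).comp
      (σ.ap ↥(LinearMap.range f)).subtype, e2.symm.surjective.comp hsurj1⟩
  -- (1) → (2)
  have h12 : (∀ S : RMod R, IsSimpleModule R (S : Type u) → σ.app S = ⊤ →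
      Parainjective R (S : Type u)) →
      ∀ C : RMod R → Prop, RespectsIso R C → σ.SigmaCN C →
        σ.HereditarySigmaTorsionClass C := by
    intro h1 C hiso hcn
    have hF : ∀ M : RMod R, σ.app M = ⊥ → C M := by
      intro M hM
      apply hcn M
      intro L f hf hL
      exact absurd (by rw [← hco M L f hf, hM, Submodule.map_bot]) hL
    constructor
    · refine ⟨⟨hF, ?_⟩, ?_, ?_⟩
      · -- σ-cohereditary class
        intro M L f hf hM
        apply key_mem σ hle hco h1 C hcn M hM
        intro T hsimp hσT hq
        obtain ⟨p, hp⟩ := hq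
        obtain ⟨q2, hq2⟩ := parainj_surj_of_submodule_surj (h1 T hsimp hσT) (σ.app L) p hp
        exact ⟨q2.comp f, hq2.comp hf⟩
      · -- closed under direct sums
        intro ι Mf hall
        haveI := Classical.decEq ι
        apply hcn
        intro L f hf hL
        obtain ⟨T, hsimp, hσT, q, hq⟩ :=
          exists_torsion_simple_quot σ hle hco h1 (L : Type u) hL
        set tot : (DirectSum ι fun i => ((Mf i) : Type u)) →ₗ[R] (T : Type u) := q.comp f
          with htot
        have htots : Function.Surjective tot := hq.comp hf
        have hnt : Nontrivial (T : Type u) := hsimp.nontrivial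
        have hjne : ∃ j, tot.comp (DirectSum.lof R ι (fun i => ((Mf i) : Type u)) j) ≠ 0 := by
          by_contra hall0
          push_neg at hall0
          have h0 : tot = 0 := DirectSum.linearMap_ext R fun i => by
            rw [hall0 i]; ext x; simp
          obtain ⟨a, b, hab⟩ := hnt
          obtain ⟨x, hx⟩ := htots (a - b)
          rw [h0] at hx
          simp only [LinearMap.zero_apply] at hx
          exact hab (by rw [← sub_eq_zero, ← hx])
        obtain ⟨j, hj⟩ := hjne
        set cj := tot.comp (DirectSum.lof R ι (fun i => ((Mf i) : Type u)) j) with hcj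
        have hcjs : Function.Surjective cj := by
          rcases eq_bot_or_eq_top (LinearMap.range cj) with hr | hr
          · exact absurd (LinearMap.range_eq_bot.mp hr) hj
          · exact LinearMap.range_eq_top.mp hr
        exact ⟨Mf j, T, hall j, torsion_simple_app_ne_bot σ T hsimp hσT, ⟨q, hq⟩, ⟨cj, hcjs⟩⟩
      · -- closed under extensions
        intro M A hA hMA
        apply hcn
        intro L f hf hL
        set A' : Submodule R (L : Type u) := A.map f with hA'
        by_cases hc : σ.app (RMod.of R ((L : Type u) ⧸ A')) = ⊥
        · -- σ(L) ≤ A', so σ(A') ≠ ⊥ : use a simple torsion quotient of A'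
          have hσLle : σ.app L ≤ A' := by
            have h := hco L (RMod.of R ((L : Type u) ⧸ A')) A'.mkQ A'.mkQ_surjective
            rw [hc] at h
            intro x hx
            have hx0 : A'.mkQ x ∈ (⊥ : Submodule R ((L : Type u) ⧸ A')) :=
              h ▸ Submodule.mem_map_of_mem hx
            rw [Submodule.mem_bot] at hx0
            rwa [Submodule.mkQ_apply, Submodule.Quotient.mk_eq_zero] at hx0
          have hσA' : σ.ap ↥A' ≠ ⊥ := by
            intro hbot
            have h := hle L A'
            rw [hbot, Submodule.map_bot, inf_eq_right.mpr hσLle] at h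
            exact hL h.symm
          obtain ⟨T, hsimp, hσT, q1, hq1⟩ :=
            exists_torsion_simple_quot σ hle hco h1 ↥A' hσA'
          obtain ⟨q2, hq2⟩ := parainj_surj_of_submodule_surj (h1 T hsimp hσT) A' q1 hq1
          exact ⟨RMod.of R ↥A, T, hA, torsion_simple_app_ne_bot σ T hsimp hσT,
            ⟨q2, hq2⟩, ⟨q1.comp (f.submoduleMap A), hq1.comp (f.submoduleMap_surjective A)⟩⟩
        · -- σ(L/A') ≠ ⊥ : use M/A and L/A'
          have hAker : A ≤ LinearMap.ker (A'.mkQ.comp f) := by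
            intro a ha
            rw [LinearMap.mem_ker, LinearMap.comp_apply, Submodule.mkQ_apply,
              Submodule.Quotient.mk_eq_zero]
            exact Submodule.mem_map_of_mem ha
          set g := A.liftQ (A'.mkQ.comp f) hAker with hg
          have hgs : Function.Surjective g := by
            intro y
            obtain ⟨m, hm⟩ := A'.mkQ_surjective.comp hf y
            exact ⟨A.mkQ m, hm⟩
          exact ⟨RMod.of R ((M : Type u) ⧸ A), RMod.of R ((L : Type u) ⧸ A'), hMA, hc,
            ⟨A'.mkQ, A'.mkQ_surjective⟩, ⟨g, hgs⟩⟩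
    · -- σ-hereditary
      refine ⟨hF, ?_⟩
      intro M Nsub hM
      apply key_mem σ hle hco h1 C hcn M hM
      intro T hsimp hσT hq
      obtain ⟨p, hp⟩ := hq
      obtain ⟨q2, hq2⟩ :=
        parainj_surj_of_submodule_surj (h1 T hsimp hσT) (σ.ap ↥Nsub) p hp
      exact parainj_surj_of_submodule_surj (h1 T hsimp hσT) Nsub q2 hq2
  have h23 : (∀ C : RMod R → Prop, RespectsIso R C → σ.SigmaCN C →
      σ.HereditarySigmaTorsionClass C) →
      ∀ C : RMod R → Prop, RespectsIso R C → σ.SigmaCN C →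
        σ.SigmaHereditaryClass C := fun h2 C hi hc => (h2 C hi hc).2
  exact ⟨⟨h12, fun h2 => h31 (h23 h2)⟩, ⟨h23, fun h3 => h12 (h31 h3)⟩⟩
end
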